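/- arXiv:nlin/0107067 — 3 statements merged into one kernel-verified Lean document; each statement's English description precedes it below -/
import Mathlib

section
/- Let J ∈ ℕ and for each j = 0,…,J let P_j be a differential operator on complex Laurent polynomials of the form P_j = Σ_{i=0}^{M} a_{j,i}(z)(d/dz)^i with Laurent-polynomial coefficients a_{j,i} ∈ ℂ[z,z⁻¹]. Let g ∈ ℂ[z,z⁻¹]. Suppose the formal series Σ_{n∈ℤ} z^n P(n)g(z) vanishes, where P(n) = Σ_{j=0}^{J} n^j P_j; explicitly, suppose that for every m ∈ ℤ one has Σ_{j=0}^{J} Σ_{k∈ℤ} (m−k)^j · (coefficient of z^k in P_j g) = 0 (a finite sum since P_j g is a Laurent polynomial). Then the polynomial in the indeterminate ε given by ε ↦ Σ_{j=0}^{J} [ ((ε − z d/dz)^j (P_j g))(z) evaluated at z = 1 ] is identically zero in ℂ[ε]; that is, P(ε − z∂_z)g(z)|_{z=1} = 0 as a polynomial in ε. -/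
noncomputable section

/-- The derivative `d/dz` on complex Laurent polynomials: `z^n ↦ n z^(n-1)`. -/
def lderiv (g : LaurentPolynomial ℂ) : LaurentPolynomial ℂ :=
  Finsupp.sum (AddMonoidAlgebra.coeff g : ℤ →₀ ℂ) fun n c =>
    (n : ℂ) • (LaurentPolynomial.C c * LaurentPolynomial.T (n - 1))

/-- The coefficient of `z^k` in a Laurent polynomial. -/
def lcoeff (g : LaurentPolynomial ℂ) (k : ℤ) : ℂ := (AddMonoidAlgebra.coeff g : ℤ →₀ ℂ) k

/-- Evaluation of a Laurent polynomial at `z = 1`, i.e. the sum of its coefficients. -/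
def evalOne (g : LaurentPolynomial ℂ) : ℂ := Finsupp.sum (AddMonoidAlgebra.coeff g : ℤ →₀ ℂ) fun _ c => c

/-- The operator `ε − z d/dz` acting `ℂ[ε]`-linearly on `ℂ[ε] ⊗ ℂ[z,z⁻¹]`, realized on
polynomials in `ε` with Laurent-polynomial coefficients. -/
def epsOp (h : Polynomial (LaurentPolynomial ℂ)) : Polynomial (LaurentPolynomial ℂ) :=
  Polynomial.X * h -
    Polynomial.sum h fun i c =>
      Polynomial.C (LaurentPolynomial.T 1 * lderiv c) * Polynomial.X ^ i

/-- Evaluation at `z = 1` of a polynomial in `ε` with Laurent-polynomial coefficients,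
yielding a polynomial in `ε`. -/
def evalZOne (h : Polynomial (LaurentPolynomial ℂ)) : Polynomial ℂ :=
  Polynomial.sum h fun i c => Polynomial.C (evalOne c) * Polynomial.X ^ i

/-!
Since `z d/dz` multiplies `z^k` by `k`, the operator `ε − z∂_z` acts on `ℂ[ε] z^k` as
multiplication by `ε − k`. Hence `P(ε − z∂_z) g |_{z=1} = Σ_j Σ_k (ε − k)^j c_{j,k}`, where
`c_{j,k}` is the coefficient of `z^k` in `P_j g`. At `ε = m ∈ ℤ` this is the coefficient of `z^m`
in `Σ_n z^n P(n) g`, which vanishes by hypothesis, and a polynomial with infinitely many roots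
is zero.
-/

open Polynomial LaurentPolynomial

lemma lderiv_add (f g : LaurentPolynomial ℂ) : lderiv (f + g) = lderiv f + lderiv g := by
  rw [lderiv, lderiv, lderiv, AddMonoidAlgebra.coeff_add]
  exact Finsupp.sum_add_index (by simp) (by intros; rw [map_add, add_mul, smul_add])

lemma lderiv_C_mul_T (c : ℂ) (k : ℤ) :
    lderiv (LaurentPolynomial.C c * T k) = (k : ℂ) • (LaurentPolynomial.C c * T (k - 1)) := by
  rw [lderiv, ← single_eq_C_mul_T, AddMonoidAlgebra.coeff_single,
    Finsupp.sum_single_index (by simp)]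

lemma T_one_mul_lderiv_C_mul_T (c : ℂ) (k : ℤ) :
    T 1 * lderiv (LaurentPolynomial.C c * T k) = (k : ℂ) • (LaurentPolynomial.C c * T k) := by
  rw [lderiv_C_mul_T, mul_smul_comm, T_mul, mul_assoc, ← T_add, sub_add_cancel]

lemma epsOp_add (h₁ h₂ : Polynomial (LaurentPolynomial ℂ)) :
    epsOp (h₁ + h₂) = epsOp h₁ + epsOp h₂ := by
  rw [epsOp, epsOp, epsOp, Polynomial.sum_add_index h₁ h₂ _ (by simp [lderiv])
    fun _ _ _ => by rw [lderiv_add, mul_add, map_add, add_mul]]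
  ring

lemma iterate_epsOp_add (j : ℕ) (h₁ h₂ : Polynomial (LaurentPolynomial ℂ)) :
    epsOp^[j] (h₁ + h₂) = epsOp^[j] h₁ + epsOp^[j] h₂ :=
  iterate_map_add (AddMonoidHom.mk' epsOp epsOp_add) j h₁ h₂

lemma epsOp_map_mul_C_T (q : ℂ[X]) (k : ℤ) :
    epsOp (q.map LaurentPolynomial.C * Polynomial.C (T k)) =
      ((X - Polynomial.C (k : ℂ)) * q).map LaurentPolynomial.C * Polynomial.C (T k) := by
  set H := q.map LaurentPolynomial.C * Polynomial.C (T k)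
  have hcoeff (i : ℕ) : H.coeff i = LaurentPolynomial.C (q.coeff i) * T k := by
    simp [H]
  have hEuler : (H.sum fun i c => Polynomial.C (T 1 * lderiv c) * X ^ i) = (k : ℂ) • H := by
    conv_rhs => rw [H.as_sum_support_C_mul_X_pow, Finset.smul_sum]
    refine Finset.sum_congr rfl fun i _ => ?_
    dsimp only
    rw [hcoeff, T_one_mul_lderiv_C_mul_T, ← Polynomial.smul_C, smul_mul_assoc]
  rw [epsOp, hEuler, Algebra.smul_def, Polynomial.algebraMap_apply,
    ← LaurentPolynomial.C_eq_algebraMap, Polynomial.map_mul, Polynomial.map_sub, map_X,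
    Polynomial.map_C]
  ring

lemma iterate_epsOp_map_mul_C_T (j : ℕ) (q : ℂ[X]) (k : ℤ) :
    epsOp^[j] (q.map LaurentPolynomial.C * Polynomial.C (T k)) =
      ((X - Polynomial.C (k : ℂ)) ^ j * q).map LaurentPolynomial.C * Polynomial.C (T k) := by
  induction j with
  | zero => simp
  | succ j ih => rw [Function.iterate_succ_apply', ih, epsOp_map_mul_C_T, pow_succ', mul_assoc]

lemma evalOne_eq_eval₂ (g : LaurentPolynomial ℂ) : evalOne g = eval₂ (RingHom.id ℂ) 1 g := by
  induction g using LaurentPolynomial.induction_on' with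
  | add f g hf hg =>
    rw [map_add, ← hf, ← hg, evalOne, evalOne, evalOne, AddMonoidAlgebra.coeff_add,
      Finsupp.sum_add_index' (fun _ => rfl) fun _ _ _ => rfl]
  | C_mul_T k c =>
    rw [evalOne, ← single_eq_C_mul_T, AddMonoidAlgebra.coeff_single, Finsupp.sum_single_index rfl,
      single_eq_C_mul_T]
    simp

lemma evalZOne_eq_map (h : Polynomial (LaurentPolynomial ℂ)) :
    evalZOne h = h.map (eval₂ (RingHom.id ℂ) 1) := by
  simp [evalZOne, Polynomial.map, eval₂_eq_sum, evalOne_eq_eval₂]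

lemma evalZOne_add (h₁ h₂ : Polynomial (LaurentPolynomial ℂ)) :
    evalZOne (h₁ + h₂) = evalZOne h₁ + evalZOne h₂ := by
  simp only [evalZOne_eq_map, Polynomial.map_add]

lemma evalZOne_iterate_epsOp_C (j : ℕ) (g : LaurentPolynomial ℂ) :
    evalZOne (epsOp^[j] (Polynomial.C g)) =
      (AddMonoidAlgebra.coeff g : ℤ →₀ ℂ).sum fun k c =>
        (X - Polynomial.C (k : ℂ)) ^ j * Polynomial.C c := by
  induction g using LaurentPolynomial.induction_on' with
  | add f g hf hg =>
    rw [map_add, iterate_epsOp_add, evalZOne_add, hf, hg, AddMonoidAlgebra.coeff_add,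
      Finsupp.sum_add_index (by simp) fun _ _ _ _ => by rw [map_add, mul_add]]
  | C_mul_T k c =>
    have hsplit : Polynomial.C (LaurentPolynomial.C c * T k) =
        (Polynomial.C c).map LaurentPolynomial.C * Polynomial.C (T k) := by
      rw [Polynomial.map_C, Polynomial.C_mul]
    rw [hsplit, iterate_epsOp_map_mul_C_T, evalZOne_eq_map, Polynomial.map_mul, Polynomial.map_map,
      Polynomial.map_C, ← single_eq_C_mul_T, AddMonoidAlgebra.coeff_single,
      Finsupp.sum_single_index (by simp)]
    simp

lemma Polynomial.eq_zero_of_forall_eval_intCast_eq_zero {R : Type*} [CommRing R] [IsDomain R]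
    [CharZero R] (p : R[X]) (h : ∀ m : ℤ, p.eval (m : R) = 0) : p = 0 :=
  p.eq_zero_of_infinite_isRoot <|
    (Set.infinite_range_of_injective Int.cast_injective).mono <| by rintro _ ⟨m, rfl⟩; exact h m

theorem billig_lemma_general (J : ℕ) (Pg : ℕ → LaurentPolynomial ℂ)
    (hvanish : ∀ m : ℤ,
      ∑ j ∈ Finset.range (J + 1),
        (Finsupp.sum (AddMonoidAlgebra.coeff (Pg j) : ℤ →₀ ℂ) fun k c => ((m - k : ℤ) : ℂ) ^ j * c) = 0) :
    ∑ j ∈ Finset.range (J + 1), evalZOne (epsOp^[j] (Polynomial.C (Pg j))) = 0 := by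
  refine Polynomial.eq_zero_of_forall_eval_intCast_eq_zero _ fun m => ?_
  simpa [evalZOne_iterate_epsOp_C, Polynomial.eval_finsetSum, Finsupp.sum] using hvanish m

/-- Billig's lemma: if `P(n) = Σ_{j=0}^{J} n^j P_j` with
`P_j = Σ_{i=0}^{M} a_{j,i}(z) (d/dz)^i` and the formal series `Σ_{n∈ℤ} z^n P(n) g(z)`
vanishes, then `P(ε − z∂_z) g(z) |_{z=1} = 0` as a polynomial in `ε`. -/
theorem billig_lemma (J M : ℕ) (a : ℕ → ℕ → LaurentPolynomial ℂ)
    (g : LaurentPolynomial ℂ) (Pg : ℕ → LaurentPolynomial ℂ)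
    (hPg : ∀ j, Pg j = ∑ i ∈ Finset.range (M + 1), a j i * lderiv^[i] g)
    (hvanish : ∀ m : ℤ,
      ∑ j ∈ Finset.range (J + 1),
        (Finsupp.sum (AddMonoidAlgebra.coeff (Pg j) : ℤ →₀ ℂ) fun k c => ((m - k : ℤ) : ℂ) ^ j * c) = 0) :
    ∑ j ∈ Finset.range (J + 1), evalZOne (epsOp^[j] (Polynomial.C (Pg j))) = 0 :=
  billig_lemma_general J Pg hvanish
end
end

section
/- Let τ : ℝ⁴ → ℝ be a smooth, everywhere positive function of the variables (x, y, t, t'). Suppose τ satisfies the two Hirota bilinear equations (D_x⁴ − 4 D_x D_{t'}) τ·τ = 0 and (D_y D_x³ + 2 D_y D_{t'} − 6 D_t D_x) τ·τ = 0 at every point. Define u = 2 ∂_x² log τ and w = 2 ∂_x ∂_y log τ. Then ∂_x w = ∂_y u everywhere, and u satisfies the (2+1)-dimensional KdV equation ∂_t u = (1/4) ∂_x²∂_y u + u ∂_y u + (1/2) (∂_x u) w. -/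
noncomputable section

/-- Partial derivative in coordinate direction `i` of a function on `Fin 4 → ℝ`.
Coordinates: `q 0 = x`, `q 1 = y`, `q 2 = t`, `q 3 = t'`. -/
def pd (i : Fin 4) (F : (Fin 4 → ℝ) → ℝ) : (Fin 4 → ℝ) → ℝ :=
  fun q => fderiv ℝ F q (Pi.single i 1)

/-- Iterated partial derivatives along a list of coordinate directions. -/
def pdList : List (Fin 4) → ((Fin 4 → ℝ) → ℝ) → ((Fin 4 → ℝ) → ℝ)
  | [], F => F
  | i :: js, F => pd i (pdList js F)

/-- The Hirota bilinear operator `D` along a list of coordinate directions: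
`(D_{i₁} ⋯ D_{iₘ} f·g)(q) = ∂_{s_{i₁}} ⋯ ∂_{s_{iₘ}} [f(q+s) g(q−s)]` at `s = 0`. -/
def hirotaD (idx : List (Fin 4)) (f g : (Fin 4 → ℝ) → ℝ) (q : Fin 4 → ℝ) : ℝ :=
  pdList idx (fun s => f (q + s) * g (q - s)) 0

/-- `u = 2 ∂_x² log τ`. -/
def uFn (τ : (Fin 4 → ℝ) → ℝ) : (Fin 4 → ℝ) → ℝ :=
  fun q => 2 * pd 0 (pd 0 (fun q' => Real.log (τ q'))) q

/-- `w = 2 ∂_x ∂_y log τ`. -/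
def wFn (τ : (Fin 4 → ℝ) → ℝ) : (Fin 4 → ℝ) → ℝ :=
  fun q => 2 * pd 0 (pd 1 (fun q' => Real.log (τ q'))) q

/-! The substitution `τ = exp φ` turns each Hirota bilinear form `D_{i₁} ⋯ D_{iₘ} τ·τ` into `τ²`
times a polynomial in the derivatives of `φ`: `D_i D_j τ·τ = 2τ² φ_{ij}` and
`D_i D_x³ τ·τ = 2τ² (φ_{ixxx} + 6 φ_{ix} φ_{xx})`. Dividing by `τ² > 0`, the two bilinear equations
become the potential equations `φ_xxxx + 6 φ_xx² = 4 φ_{xt'}` and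
`φ_yxxx + 6 φ_xy φ_xx + 2 φ_{yt'} = 6 φ_xt`. Differentiating the first in `y` and the second in `x`
and eliminating `φ_{xyt'}` gives the KdV equation for `u = 2 φ_xx`, with `w = 2 φ_xy`. -/

section PartialDerivatives

variable {F f g : (Fin 4 → ℝ) → ℝ} {i j : Fin 4}

@[fun_prop]
theorem contDiff_pd (hF : ContDiff ℝ (⊤ : ℕ∞) F) (i : Fin 4) : ContDiff ℝ (⊤ : ℕ∞) (pd i F) :=
  (contDiff_infty_iff_fderiv.mp hF).2.clm_apply contDiff_const

@[fun_prop]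
theorem differentiable_pd (hF : ContDiff ℝ (⊤ : ℕ∞) F) (i : Fin 4) :
    Differentiable ℝ (pd i F) :=
  (contDiff_pd hF i).differentiable (by simp)

theorem pd_pd_eq_fderiv_fderiv (hF : ContDiff ℝ (⊤ : ℕ∞) F) (i j : Fin 4) (q : Fin 4 → ℝ) :
    pd i (pd j F) q = fderiv ℝ (fderiv ℝ F) q (Pi.single i 1) (Pi.single j 1) := by
  have hd : DifferentiableAt ℝ (fderiv ℝ F) q :=
    (contDiff_infty_iff_fderiv.mp hF).2.differentiable (by simp) q
  change fderiv ℝ (fun p => fderiv ℝ F p (Pi.single j 1)) q (Pi.single i 1) = _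
  rw [fderiv_clm_apply hd (differentiableAt_const _)]
  simp

theorem pd_comm (hF : ContDiff ℝ (⊤ : ℕ∞) F) (i j : Fin 4) :
    pd i (pd j F) = pd j (pd i F) := by
  funext q
  have hsymm : IsSymmSndFDerivAt ℝ F q :=
    hF.contDiffAt.isSymmSndFDerivAt <| by
      rw [minSmoothness_of_isRCLikeNormedField]; exact WithTop.coe_le_coe.mpr le_top
  rw [pd_pd_eq_fderiv_fderiv hF, pd_pd_eq_fderiv_fderiv hF, hsymm]

theorem pd_const (c : ℝ) (i : Fin 4) : pd i (fun _ => c) = fun _ => 0 := by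
  funext q
  simp [pd]

theorem pd_apply_eq_zero (hF : ∀ q, F q = 0) (i : Fin 4) (q : Fin 4 → ℝ) : pd i F q = 0 := by
  rw [show F = fun _ => 0 from funext hF, pd_const]

theorem pd_add (hf : Differentiable ℝ f) (hg : Differentiable ℝ g) (i : Fin 4) :
    pd i (fun q => f q + g q) = fun q => pd i f q + pd i g q := by
  funext q
  simp [pd, fderiv_fun_add (hf q) (hg q)]

theorem pd_sub (hf : Differentiable ℝ f) (hg : Differentiable ℝ g) (i : Fin 4) :
    pd i (fun q => f q - g q) = fun q => pd i f q - pd i g q := by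
  funext q
  simp [pd, fderiv_fun_sub (hf q) (hg q)]

theorem pd_mul (hf : Differentiable ℝ f) (hg : Differentiable ℝ g) (i : Fin 4) :
    pd i (fun q => f q * g q) = fun q => pd i f q * g q + f q * pd i g q := by
  funext q
  simp [pd, fderiv_fun_mul (hf q) (hg q)]
  ring

theorem pd_mul_comp_add_sub (hf : Differentiable ℝ f) (hg : Differentiable ℝ g)
    (q : Fin 4 → ℝ) (i : Fin 4) :
    pd i (fun s => f (q + s) * g (q - s)) =
      fun s => pd i f (q + s) * g (q - s) - f (q + s) * pd i g (q - s) := by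
  funext s
  have hf' : HasFDerivAt (fun s => f (q + s)) (fderiv ℝ f (q + s)) s :=
    (hasFDerivAt_comp_add_left q).mpr (hf _).hasFDerivAt
  have hg' : HasFDerivAt (fun s => g (q - s))
      ((fderiv ℝ g (q - s)).comp (-ContinuousLinearMap.id ℝ _)) s :=
    (hg _).hasFDerivAt.comp s ((hasFDerivAt_id s).const_sub q)
  simp only [pd, (hf'.fun_mul hg').fderiv]
  simp
  ring

theorem pd_eq_pd_log_mul {τ : (Fin 4 → ℝ) → ℝ} (hτ : Differentiable ℝ τ) (hpos : ∀ q, 0 < τ q)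
    (i : Fin 4) :
    pd i τ = fun q => pd i (fun q' => Real.log (τ q')) q * τ q := by
  funext q
  simp only [pd, ((hτ q).hasFDerivAt.log (hpos q).ne').fderiv]
  rw [smul_apply, smul_eq_mul]
  field_simp [(hpos q).ne']

end PartialDerivatives

section HirotaForms

variable {τ φ : (Fin 4 → ℝ) → ℝ}

theorem hirotaD_pair_eq (hτ : ContDiff ℝ (⊤ : ℕ∞) τ) (hφ : ContDiff ℝ (⊤ : ℕ∞) φ)
    (hlog : ∀ i, pd i τ = fun q => pd i φ q * τ q) (i j : Fin 4) (q : Fin 4 → ℝ) :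
    hirotaD [i, j] τ τ q = 2 * τ q ^ 2 * pd i (pd j φ) q := by
  have hτ' : Differentiable ℝ τ := hτ.differentiable (by simp)
  simp (disch := fun_prop) only [hirotaD, pdList, pd_mul_comp_add_sub, pd_sub, add_zero, sub_zero]
  simp (disch := fun_prop) only [hlog, pd_mul]
  ring

theorem hirotaD_quartic_eq (hτ : ContDiff ℝ (⊤ : ℕ∞) τ) (hφ : ContDiff ℝ (⊤ : ℕ∞) φ)
    (hlog : ∀ i, pd i τ = fun q => pd i φ q * τ q) (i : Fin 4) (q : Fin 4 → ℝ) :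
    hirotaD [i, 0, 0, 0] τ τ q =
      2 * τ q ^ 2 * (pd i (pd 0 (pd 0 (pd 0 φ))) q + 6 * pd i (pd 0 φ) q * pd 0 (pd 0 φ) q) := by
  have hτ' : Differentiable ℝ τ := hτ.differentiable (by simp)
  simp (disch := fun_prop) only [hirotaD, pdList, pd_mul_comp_add_sub, pd_sub, add_zero, sub_zero]
  simp (disch := fun_prop) only [hlog, pd_mul, pd_add]
  ring

theorem log_form_of_hirotaD_x4 (hτ : ContDiff ℝ (⊤ : ℕ∞) τ) (hφ : ContDiff ℝ (⊤ : ℕ∞) φ)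
    (hlog : ∀ i, pd i τ = fun q => pd i φ q * τ q) {q : Fin 4 → ℝ} (hτq : τ q ≠ 0)
    (h : hirotaD [0, 0, 0, 0] τ τ q - 4 * hirotaD [0, 3] τ τ q = 0) :
    pd 0 (pd 0 (pd 0 (pd 0 φ))) q + 6 * pd 0 (pd 0 φ) q * pd 0 (pd 0 φ) q
      - 4 * pd 0 (pd 3 φ) q = 0 := by
  rw [hirotaD_quartic_eq hτ hφ hlog, hirotaD_pair_eq hτ hφ hlog] at h
  refine (mul_eq_zero.mp ?_).resolve_left (by positivity : 2 * τ q ^ 2 ≠ 0)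
  linear_combination h

theorem log_form_of_hirotaD_yx3 (hτ : ContDiff ℝ (⊤ : ℕ∞) τ) (hφ : ContDiff ℝ (⊤ : ℕ∞) φ)
    (hlog : ∀ i, pd i τ = fun q => pd i φ q * τ q) {q : Fin 4 → ℝ} (hτq : τ q ≠ 0)
    (h : hirotaD [1, 0, 0, 0] τ τ q + 2 * hirotaD [1, 3] τ τ q - 6 * hirotaD [2, 0] τ τ q = 0) :
    pd 1 (pd 0 (pd 0 (pd 0 φ))) q + 6 * pd 1 (pd 0 φ) q * pd 0 (pd 0 φ) q
      + 2 * pd 1 (pd 3 φ) q - 6 * pd 2 (pd 0 φ) q = 0 := by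
  rw [hirotaD_quartic_eq hτ hφ hlog, hirotaD_pair_eq hτ hφ hlog, hirotaD_pair_eq hτ hφ hlog] at h
  refine (mul_eq_zero.mp ?_).resolve_left (by positivity : 2 * τ q ^ 2 ≠ 0)
  linear_combination h

end HirotaForms

theorem kdv_of_log_form {φ u w : (Fin 4 → ℝ) → ℝ} (hφ : ContDiff ℝ (⊤ : ℕ∞) φ)
    (h₁ : ∀ q, pd 0 (pd 0 (pd 0 (pd 0 φ))) q + 6 * pd 0 (pd 0 φ) q * pd 0 (pd 0 φ) q
      - 4 * pd 0 (pd 3 φ) q = 0)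
    (h₂ : ∀ q, pd 1 (pd 0 (pd 0 (pd 0 φ))) q + 6 * pd 1 (pd 0 φ) q * pd 0 (pd 0 φ) q
      + 2 * pd 1 (pd 3 φ) q - 6 * pd 2 (pd 0 φ) q = 0)
    (hu : u = fun q => 2 * pd 0 (pd 0 φ) q) (hw : w = fun q => 2 * pd 0 (pd 1 φ) q)
    (q : Fin 4 → ℝ) :
    pd 0 w q = pd 1 u q ∧
      pd 2 u q = (1 / 4) * pd 0 (pd 0 (pd 1 u)) q + u q * pd 1 u q + (1 / 2) * pd 0 u q * w q := by
  have k₁ := pd_apply_eq_zero h₁ 1 q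
  have k₂ := pd_apply_eq_zero h₂ 0 q
  subst hu hw
  simp (disch := fun_prop) only [pd_add, pd_sub, pd_mul, pd_const, zero_mul, zero_add] at k₁ k₂ ⊢
  -- `pd_comm` is a permutation lemma, so `simp` uses it to sort mixed partials into one order.
  simp (disch := fun_prop) only [pd_comm] at k₁ k₂ ⊢
  refine ⟨trivial, ?_⟩
  linear_combination (-1 / 6 : ℝ) * k₁ - (1 / 3 : ℝ) * k₂

/-- if a smooth positive `τ` satisfies the two Hirota bilinear equations
`(D_x⁴ − 4 D_x D_{t'}) τ·τ = 0` and `(D_y D_x³ + 2 D_y D_{t'} − 6 D_t D_x) τ·τ = 0`,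
then `u = 2 ∂_x² log τ` solves the (2+1)-dimensional KdV equation
`∂_t u = (1/4) ∂_x²∂_y u + u ∂_y u + (1/2)(∂_x u) w` with `w = 2 ∂_x∂_y log τ`
satisfying `∂_x w = ∂_y u`. -/
theorem twoPlusOne_KdV_from_bilinear (τ : (Fin 4 → ℝ) → ℝ)
    (hsmooth : ContDiff ℝ (⊤ : ℕ∞) τ) (hpos : ∀ q, 0 < τ q)
    (hbil1 : ∀ q, hirotaD [0, 0, 0, 0] τ τ q - 4 * hirotaD [0, 3] τ τ q = 0)
    (hbil2 : ∀ q, hirotaD [1, 0, 0, 0] τ τ q + 2 * hirotaD [1, 3] τ τ q -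
        6 * hirotaD [2, 0] τ τ q = 0) :
    ∀ q : Fin 4 → ℝ,
      pd 0 (wFn τ) q = pd 1 (uFn τ) q ∧
      pd 2 (uFn τ) q =
        (1 / 4) * pd 0 (pd 0 (pd 1 (uFn τ))) q +
          uFn τ q * pd 1 (uFn τ) q +
          (1 / 2) * pd 0 (uFn τ) q * wFn τ q := by
  have hlogτ : ContDiff ℝ (⊤ : ℕ∞) (fun q => Real.log (τ q)) :=
    hsmooth.log fun q => (hpos q).ne'
  have hlog := pd_eq_pd_log_mul (hsmooth.differentiable (by simp)) hpos
  exact kdv_of_log_form hlogτ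
    (fun q => log_form_of_hirotaD_x4 hsmooth hlogτ hlog (hpos q).ne' (hbil1 q))
    (fun q => log_form_of_hirotaD_yx3 hsmooth hlogτ hlog (hpos q).ne' (hbil2 q)) rfl rfl
end
end

section
/- Fix N ∈ ℕ, reals p_1,…,p_N > 0, a_1,…,a_N ∈ ℝ, and nonzero reals α, β, γ with p_j α ≠ ±1, p_j β ≠ ±1, p_j γ ≠ ±1 for all j. For l, m, n ∈ ℤ define the discrete N-soliton tau function τ(l, m, n) = Σ_{S ⊆ {1,…,N}} [ Π_{i<j, i,j∈S} ((p_i − p_j)/(p_i + p_j))² ] · Π_{j∈S} a_j ((1 + p_j α)/(1 − p_j α))^l ((1 + p_j β)/(1 − p_j β))^m ((1 + p_j γ)/(1 − p_j γ))^n. Then τ satisfies the Hirota–Miwa (discrete KP) equation: α(β − γ) τ(l+1, m, n) τ(l, m+1, n+1) + β(γ − α) τ(l, m+1, n) τ(l+1, m, n+1) + γ(α − β) τ(l, m, n+1) τ(l+1, m+1, n) = 0 for all l, m, n ∈ ℤ. -/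
noncomputable section

/-- The discrete `N`-soliton tau function obtained from the Miwa transformation. -/
def tauD {N : ℕ} (p a : Fin N → ℝ) (α β γ : ℝ) (l m n : ℤ) : ℝ :=
  ∑ S : Finset (Fin N),
    (∏ i ∈ S, ∏ j ∈ S.filter (fun j => i < j), ((p i - p j) / (p i + p j)) ^ 2) *
      ∏ j ∈ S, a j * ((1 + p j * α) / (1 - p j * α)) ^ l *
        ((1 + p j * β) / (1 - p j * β)) ^ m * ((1 + p j * γ) / (1 - p j * γ)) ^ n


namespace HMaux

open Finset Polynomial

variable {N : ℕ}

/-- sorted pairs of `Fin N` -/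
def PP (N : ℕ) : Finset (Fin N × Fin N) :=
  (Finset.univ : Finset (Fin N × Fin N)).filter (fun x => x.1 < x.2)

@[simp] lemma mem_PP {x : Fin N × Fin N} : x ∈ PP N ↔ x.1 < x.2 := by
  simp [PP]

/-- squared Vandermonde over pairs of `D` -/
def VV (D : Finset (Fin N)) (q : Fin N → ℝ) : ℝ :=
  ∏ x ∈ PP N, if x.1 ∈ D ∧ x.2 ∈ D then (q x.1 - q x.2) ^ 2 else 1

def Gf (a b c t : ℝ) : ℝ := (1 + t * a) * (1 - t * b) * (1 - t * c)

def HP (α β γ : ℝ) (D : Finset (Fin N)) (q : Fin N → ℝ) : ℝ :=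
  α * (β - γ) * ∏ j ∈ D, Gf α β γ (q j)
  + β * (γ - α) * ∏ j ∈ D, Gf β α γ (q j)
  + γ * (α - β) * ∏ j ∈ D, Gf γ α β (q j)

def qf (p : Fin N → ℝ) (A : Finset (Fin N)) (j : Fin N) : ℝ :=
  if j ∈ A then p j else -(p j)

def coreSum (α β γ : ℝ) (D : Finset (Fin N)) (p : Fin N → ℝ) : ℝ :=
  ∑ A ∈ D.powerset, VV D (qf p A) * HP α β γ D (qf p A)

def Rw (i : Fin N) (E : Finset (Fin N)) (q : Fin N → ℝ) : ℝ :=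
  ∏ j ∈ E, (q i - q j) ^ 2

lemma sq_sub_comm (a b : ℝ) : (a - b) ^ 2 = (b - a) ^ 2 := by ring

@[simp] lemma qf_sq (p : Fin N → ℝ) (A : Finset (Fin N)) (j : Fin N) :
    (qf p A j) ^ 2 = (p j) ^ 2 := by
  unfold qf; split_ifs <;> ring

lemma VV_congr {D : Finset (Fin N)} {q q' : Fin N → ℝ}
    (h : ∀ j ∈ D, q j = q' j) : VV D q = VV D q' := by
  unfold VV
  refine prod_congr rfl fun x _ => ?_
  by_cases hx : x.1 ∈ D ∧ x.2 ∈ D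
  · rw [if_pos hx, if_pos hx, h _ hx.1, h _ hx.2]
  · rw [if_neg hx, if_neg hx]

lemma HP_congr {α β γ : ℝ} {D : Finset (Fin N)} {q q' : Fin N → ℝ}
    (h : ∀ j ∈ D, q j = q' j) : HP α β γ D q = HP α β γ D q' := by
  have e : ∀ a b c : ℝ, ∏ j ∈ D, Gf a b c (q j) = ∏ j ∈ D, Gf a b c (q' j) :=
    fun a b c => prod_congr rfl fun j hj => by rw [h j hj]
  unfold HP; rw [e, e, e]

/-- splitting off the row of `i` from the squared Vandermonde -/
lemma VV_erase {D : Finset (Fin N)} {i : Fin N} (hi : i ∈ D) (q : Fin N → ℝ) :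
    VV D q = VV (D.erase i) q * Rw i (D.erase i) q := by
  classical
  unfold VV
  have key : ∀ x ∈ PP N, (if x.1 ∈ D ∧ x.2 ∈ D then (q x.1 - q x.2) ^ 2 else 1)
      = (if x.1 ∈ D.erase i ∧ x.2 ∈ D.erase i then (q x.1 - q x.2) ^ 2 else 1)
        * (if (x.1 = i ∧ x.2 ∈ D.erase i) ∨ (x.2 = i ∧ x.1 ∈ D.erase i)
            then (q x.1 - q x.2) ^ 2 else 1) := by
    intro x hx
    have hne : x.1 ≠ x.2 := ne_of_lt (mem_PP.mp hx)
    by_cases h1 : x.1 = i <;> by_cases h2 : x.2 = i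
    · exact absurd (h1.trans h2.symm) hne
    · simp [h1, h2, hi, mem_erase]
    · simp [h1, h2, hi, mem_erase]
    · simp [mem_erase, h1, h2]
  rw [prod_congr rfl key, prod_mul_distrib]
  congr 1
  rw [show (Rw i (D.erase i) q) = ∏ j ∈ D.erase i, (q i - q j) ^ 2 from rfl]
  rw [← prod_filter (fun x : Fin N × Fin N =>
      (x.1 = i ∧ x.2 ∈ D.erase i) ∨ (x.2 = i ∧ x.1 ∈ D.erase i))]
  refine prod_nbij' (fun x => if x.1 = i then x.2 else x.1)
    (fun j => if i < j then (i, j) else (j, i)) ?_ ?_ ?_ ?_ ?_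
  · intro x hxx
    rcases mem_filter.mp hxx with ⟨hxP, hc⟩
    rcases hc with ⟨h1, h2⟩ | ⟨h2, h1⟩
    · simpa [h1] using h2
    · have : x.1 ≠ i := by
        have := mem_PP.mp hxP; rw [h2] at this; exact ne_of_lt this
      simpa [this] using h1
  · intro j hj
    have hji : j ≠ i := (mem_erase.mp hj).1
    rcases lt_or_gt_of_ne hji with h | h
    · rw [if_neg (not_lt.mpr h.le)]
      exact mem_filter.mpr ⟨mem_PP.mpr h, Or.inr ⟨rfl, hj⟩⟩
    · rw [if_pos h]
      exact mem_filter.mpr ⟨mem_PP.mpr h, Or.inl ⟨rfl, hj⟩⟩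
  · intro x hxx
    rcases mem_filter.mp hxx with ⟨hxP, hc⟩
    have hlt := mem_PP.mp hxP
    rcases hc with ⟨h1, _⟩ | ⟨h2, _⟩
    · simp only [h1, if_pos rfl]
      rw [if_pos (h1 ▸ hlt)]
      exact Prod.ext h1.symm rfl
    · have hne1 : x.1 ≠ i := by rw [h2] at hlt; exact ne_of_lt hlt
      simp only [if_neg hne1]
      rw [if_neg (not_lt.mpr (h2 ▸ hlt).le)]
      exact Prod.ext rfl h2.symm
  · intro j hj
    have hji : j ≠ i := (mem_erase.mp hj).1
    rcases lt_or_gt_of_ne hji with h | h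
    · rw [if_neg (not_lt.mpr h.le)]; simp [hji]
    · rw [if_pos h]; simp
  · intro x hxx
    rcases mem_filter.mp hxx with ⟨hxP, hc⟩
    have hlt := mem_PP.mp hxP
    by_cases h1 : x.1 = i
    · rw [if_pos h1, h1]
    · rw [if_neg h1]
      have h2 : x.2 = i := by
        rcases hc with ⟨ha, _⟩ | ⟨hb, _⟩
        · exact absurd ha h1
        · exact hb
      rw [h2, sq_sub_comm]

variable {N : ℕ}

lemma prod_comp_perm {D : Finset (Fin N)} (e : Equiv.Perm (Fin N))
    (hD : ∀ j, j ∈ D ↔ e j ∈ D) (f : Fin N → ℝ) :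
    ∏ j ∈ D, f (e j) = ∏ j ∈ D, f j := by
  refine prod_nbij' (fun j => e j) (fun j => e.symm j) ?_ ?_ ?_ ?_ ?_
  · intro a ha; exact (hD a).mp ha
  · intro a ha
    have : e (e.symm a) ∈ D := by simpa using ha
    exact (hD _).mpr this
  · intro a _; simp
  · intro a _; simp
  · intro a _; rfl

lemma VV_comp_perm {D : Finset (Fin N)} (e : Equiv.Perm (Fin N))
    (hD : ∀ j, j ∈ D ↔ e j ∈ D) (q : Fin N → ℝ) :
    VV D (fun j => q (e j)) = VV D q := by
  unfold VV
  refine prod_nbij' (fun x => if e x.1 < e x.2 then (e x.1, e x.2) else (e x.2, e x.1))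
    (fun y => if e.symm y.1 < e.symm y.2 then (e.symm y.1, e.symm y.2)
      else (e.symm y.2, e.symm y.1)) ?_ ?_ ?_ ?_ ?_
  · intro x hx
    have hne : e x.1 ≠ e x.2 := fun h => (ne_of_lt (mem_PP.mp hx)) (e.injective h)
    rcases lt_or_gt_of_ne hne with h | h
    · rw [if_pos h]; exact mem_PP.mpr h
    · rw [if_neg (not_lt.mpr h.le)]; exact mem_PP.mpr h
  · intro y hy
    have hne : e.symm y.1 ≠ e.symm y.2 := fun h => (ne_of_lt (mem_PP.mp hy)) (e.symm.injective h)
    rcases lt_or_gt_of_ne hne with h | h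
    · rw [if_pos h]; exact mem_PP.mpr h
    · rw [if_neg (not_lt.mpr h.le)]; exact mem_PP.mpr h
  · intro x hx
    have hlt := mem_PP.mp hx
    by_cases h : e x.1 < e x.2
    · rw [if_pos h]; simp [hlt]
    · rw [if_neg h]; simp [not_lt.mpr hlt.le, hlt]
  · intro y hy
    have hlt := mem_PP.mp hy
    by_cases h : e.symm y.1 < e.symm y.2
    · rw [if_pos h]; simp [hlt]
    · rw [if_neg h]; simp [not_lt.mpr hlt.le, hlt]
  · intro x hx
    dsimp only
    by_cases h : e x.1 < e x.2
    · rw [if_pos h]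
      by_cases hm : x.1 ∈ D ∧ x.2 ∈ D
      · rw [if_pos hm, if_pos ⟨(hD _).mp hm.1, (hD _).mp hm.2⟩]
      · rw [if_neg hm, if_neg (fun hc => hm ⟨(hD _).mpr hc.1, (hD _).mpr hc.2⟩)]
    · rw [if_neg h]
      by_cases hm : x.1 ∈ D ∧ x.2 ∈ D
      · rw [if_pos hm, if_pos ⟨(hD _).mp hm.2, (hD _).mp hm.1⟩, sq_sub_comm]
      · rw [if_neg hm, if_neg (fun hc => hm ⟨(hD _).mpr hc.2, (hD _).mpr hc.1⟩)]

lemma HP_comp_perm {α β γ : ℝ} {D : Finset (Fin N)} (e : Equiv.Perm (Fin N))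
    (hD : ∀ j, j ∈ D ↔ e j ∈ D) (q : Fin N → ℝ) :
    HP α β γ D (fun j => q (e j)) = HP α β γ D q := by
  unfold HP
  rw [prod_comp_perm e hD (fun j => Gf α β γ (q j)),
    prod_comp_perm e hD (fun j => Gf β α γ (q j)),
    prod_comp_perm e hD (fun j => Gf γ α β (q j))]

lemma swap_mem_iff {D : Finset (Fin N)} {i₀ i₁ : Fin N} (h0 : i₀ ∈ D) (h1 : i₁ ∈ D) :
    ∀ j, j ∈ D ↔ Equiv.swap i₀ i₁ j ∈ D := by
  intro j
  rcases eq_or_ne j i₀ with rfl | hj0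
  · simp [Equiv.swap_apply_left, h0, h1]
  rcases eq_or_ne j i₁ with rfl | hj1
  · simp [Equiv.swap_apply_right, h0, h1]
  · rw [Equiv.swap_apply_of_ne_of_ne hj0 hj1]

/-- `coreSum` only depends on `p` on `D`. -/
lemma coreSum_congr {α β γ : ℝ} {D : Finset (Fin N)} {p p' : Fin N → ℝ}
    (h : ∀ j ∈ D, p j = p' j) : coreSum α β γ D p = coreSum α β γ D p' := by
  unfold coreSum
  refine sum_congr rfl fun A hA => ?_
  have hq : ∀ j ∈ D, qf p A j = qf p' A j := by
    intro j hj; unfold qf; rw [h j hj]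
  rw [VV_congr hq, HP_congr hq]

/-- flipping the sign of `p` at one site does not change `coreSum`. -/
lemma coreSum_flip {α β γ : ℝ} {D : Finset (Fin N)} (p : Fin N → ℝ) (i : Fin N) :
    coreSum α β γ D (Function.update p i (-(p i))) = coreSum α β γ D p := by
  classical
  by_cases hiD : i ∈ D
  swap
  · exact coreSum_congr (fun j hj => Function.update_of_ne (fun h : j = i => hiD (h ▸ hj)) _ _)
  unfold coreSum
  set T : Finset (Fin N) → Finset (Fin N) :=
    fun A => if i ∈ A then A.erase i else insert i A with hT
  have hTmem : ∀ A ∈ D.powerset, T A ∈ D.powerset := by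
    intro A hA
    have hAD := mem_powerset.mp hA
    rw [hT]; dsimp only
    by_cases h : i ∈ A
    · rw [if_pos h]; exact mem_powerset.mpr ((erase_subset _ _).trans hAD)
    · rw [if_neg h]; exact mem_powerset.mpr (insert_subset hiD hAD)
  have hTT : ∀ A, T (T A) = A := by
    intro A
    rw [hT]; dsimp only
    by_cases h : i ∈ A
    · rw [if_pos h, if_neg (fun hc => (mem_erase.mp hc).1 rfl)]
      exact insert_erase h
    · rw [if_neg h, if_pos (mem_insert_self i A), erase_insert h]
  have hTmemiff : ∀ A (j : Fin N), j ≠ i → (j ∈ A ↔ j ∈ T A) := by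
    intro A j hji
    rw [hT]; dsimp only
    by_cases h : i ∈ A
    · rw [if_pos h, mem_erase]; exact ⟨fun hj => ⟨hji, hj⟩, fun hj => hj.2⟩
    · rw [if_neg h, mem_insert]
      exact ⟨fun hj => Or.inr hj, fun hj => hj.resolve_left hji⟩
  have hTi : ∀ A, (i ∈ T A ↔ i ∉ A) := by
    intro A
    rw [hT]; dsimp only
    by_cases h : i ∈ A
    · simp [h]
    · simp [h]
  refine sum_nbij' T T hTmem hTmem (fun A _ => hTT A) (fun A _ => hTT A) ?_
  intro A _
  have hq : qf (Function.update p i (-(p i))) A = qf p (T A) := by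
    funext j
    unfold qf
    rcases eq_or_ne j i with rfl | hji
    · by_cases h : j ∈ A
      · rw [if_pos h, if_neg (fun hc => (hTi A).mp hc h), Function.update_self]
      · rw [if_neg h, if_pos ((hTi A).mpr h), Function.update_self, neg_neg]
    · have hup : Function.update p i (-(p i)) j = p j := Function.update_of_ne hji _ _
      by_cases h : j ∈ A
      · rw [if_pos h, if_pos ((hTmemiff A j hji).mp h), hup]
      · rw [if_neg h, if_neg (fun hc => h ((hTmemiff A j hji).mpr hc)), hup]
  rw [hq]

variable {N : ℕ}

lemma Gf_zero (a b c : ℝ) : Gf a b c 0 = 1 := by unfold Gf; ring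

lemma VV_zero_of_eq {D : Finset (Fin N)} {q : Fin N → ℝ} {i₀ i₁ : Fin N}
    (h01 : i₀ ≠ i₁) (h0 : i₀ ∈ D) (h1 : i₁ ∈ D) (hq : q i₀ = q i₁) : VV D q = 0 := by
  rw [VV_erase h0 q]
  have : Rw i₀ (D.erase i₀) q = 0 := by
    refine prod_eq_zero (mem_erase.mpr ⟨h01.symm, h1⟩) ?_
    rw [hq, sub_self]; ring
  rw [this, mul_zero]

lemma coreSum_zero_site {α β γ : ℝ} {D : Finset (Fin N)} {p : Fin N → ℝ} {i : Fin N}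
    (hi : i ∈ D) (hp0 : p i = 0)
    (h : coreSum α β γ (D.erase i) p = 0) : coreSum α β γ D p = 0 := by
  classical
  set E := D.erase i with hE
  have hiE : i ∉ E := notMem_erase i D
  have hD : D = insert i E := (insert_erase hi).symm
  unfold coreSum
  rw [hD, sum_powerset_insert hiE]
  have hins : ∀ A ∈ E.powerset, qf p (insert i A) = qf p A := by
    intro A hA
    have hiA : i ∉ A := fun hc => hiE (mem_powerset.mp hA hc)
    funext j
    unfold qf
    rcases eq_or_ne j i with rfl | hji
    · rw [if_pos (mem_insert_self j A), if_neg hiA, hp0, neg_zero]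
    · have : j ∈ insert i A ↔ j ∈ A := by
        rw [mem_insert]; exact ⟨fun hc => hc.resolve_left hji, Or.inr⟩
      by_cases hj : j ∈ A
      · rw [if_pos (this.mpr hj), if_pos hj]
      · rw [if_neg (fun hc => hj (this.mp hc)), if_neg hj]
  have hterm : ∀ A ∈ E.powerset,
      VV (insert i E) (qf p A) * HP α β γ (insert i E) (qf p A)
      = (∏ j ∈ E, (p j) ^ 2) * (VV E (qf p A) * HP α β γ E (qf p A)) := by
    intro A hA
    have hiA : i ∉ A := fun hc => hiE (mem_powerset.mp hA hc)
    have hq0 : qf p A i = 0 := by unfold qf; rw [if_neg hiA, hp0, neg_zero]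
    have hiI : i ∈ insert i E := mem_insert_self i E
    have hVV : VV (insert i E) (qf p A)
        = VV E (qf p A) * ∏ j ∈ E, (p j) ^ 2 := by
      rw [VV_erase hiI (qf p A), erase_insert hiE]
      congr 1
      unfold Rw
      refine prod_congr rfl fun j _ => ?_
      rw [hq0]; rw [show (0 - qf p A j) ^ 2 = (qf p A j) ^ 2 by ring, qf_sq]
    have hHP : HP α β γ (insert i E) (qf p A) = HP α β γ E (qf p A) := by
      unfold HP
      rw [prod_insert hiE, prod_insert hiE, prod_insert hiE, hq0, Gf_zero, Gf_zero, Gf_zero,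
        one_mul, one_mul, one_mul]
    rw [hVV, hHP]; ring
  have e1 : ∑ A ∈ E.powerset, VV (insert i E) (qf p (insert i A)) * HP α β γ (insert i E) (qf p (insert i A))
      = ∑ A ∈ E.powerset, VV (insert i E) (qf p A) * HP α β γ (insert i E) (qf p A) :=
    sum_congr rfl (fun A hA => by rw [hins A hA])
  have e2 : ∑ A ∈ E.powerset, VV (insert i E) (qf p A) * HP α β γ (insert i E) (qf p A)
      = (∏ j ∈ E, (p j) ^ 2) * coreSum α β γ E p := by
    unfold coreSum; rw [mul_sum]; exact sum_congr rfl hterm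
  rw [e1, e2, h, mul_zero, add_zero]

lemma coreSum_pair {α β γ : ℝ} {D : Finset (Fin N)} {p : Fin N → ℝ} {i₀ i₁ : Fin N}
    (h01 : i₀ ≠ i₁) (h0 : i₀ ∈ D) (h1 : i₁ ∈ D) (hpp : p i₀ = p i₁)
    (h2 : coreSum α β γ ((D.erase i₀).erase i₁) p = 0) : coreSum α β γ D p = 0 := by
  classical
  set E := (D.erase i₀).erase i₁ with hEdef
  set ρ := p i₁ with hρ
  have hi₁0 : i₁ ∈ D.erase i₀ := mem_erase.mpr ⟨h01.symm, h1⟩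
  have hE1 : i₁ ∉ E := notMem_erase _ _
  have hD0 : D.erase i₀ = insert i₁ E := (insert_erase hi₁0).symm
  have hi₀notin : i₀ ∉ insert i₁ E := by rw [← hD0]; exact notMem_erase _ _
  have hE0 : i₀ ∉ E := fun hc => hi₀notin (mem_insert_of_mem hc)
  have hD : D = insert i₀ (insert i₁ E) := by rw [← hD0, insert_erase h0]
  have hsub : ∀ {A : Finset (Fin N)}, A ∈ E.powerset → i₀ ∉ A ∧ i₁ ∉ A := by
    intro A hA
    have := mem_powerset.mp hA
    exact ⟨fun hc => hE0 (this hc), fun hc => hE1 (this hc)⟩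
  unfold coreSum
  rw [hD, sum_powerset_insert hi₀notin, sum_powerset_insert hE1, sum_powerset_insert hE1]
  rw [← hD]
  -- the four groups
  have grp1 : ∀ A ∈ E.powerset, VV D (qf p A) * HP α β γ D (qf p A) = 0 := by
    intro A hA
    have hq : qf p A i₀ = qf p A i₁ := by
      unfold qf; rw [if_neg (hsub hA).1, if_neg (hsub hA).2, hpp]
    rw [VV_zero_of_eq h01 h0 h1 hq, zero_mul]
  have grp4 : ∀ A ∈ E.powerset,
      VV D (qf p (insert i₀ (insert i₁ A))) * HP α β γ D (qf p (insert i₀ (insert i₁ A))) = 0 := by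
    intro A hA
    have hq : qf p (insert i₀ (insert i₁ A)) i₀ = qf p (insert i₀ (insert i₁ A)) i₁ := by
      unfold qf
      rw [if_pos (mem_insert_self _ _), if_pos (mem_insert_of_mem (mem_insert_self _ _)), hpp]
    rw [VV_zero_of_eq h01 h0 h1 hq, zero_mul]
  have grp23 : ∀ A ∈ E.powerset,
      VV D (qf p (insert i₀ A)) * HP α β γ D (qf p (insert i₀ A))
      = VV D (qf p (insert i₁ A)) * HP α β γ D (qf p (insert i₁ A)) := by
    intro A hA
    have hcomp : qf p (insert i₀ A) = fun j => qf p (insert i₁ A) (Equiv.swap i₀ i₁ j) := by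
      funext j
      unfold qf
      rcases eq_or_ne j i₀ with rfl | hj0
      · rw [Equiv.swap_apply_left, if_pos (mem_insert_self _ _),
          if_pos (mem_insert_self _ _), hpp]
      rcases eq_or_ne j i₁ with rfl | hj1
      · rw [Equiv.swap_apply_right]
        have hnot0 : j ∉ insert i₀ A := by
          rw [mem_insert]; rintro (rfl | hc)
          · exact h01 rfl
          · exact (hsub hA).2 hc
        have hnot1 : i₀ ∉ insert j A := by
          rw [mem_insert]; rintro (hc | hc)
          · exact h01 hc
          · exact (hsub hA).1 hc
        rw [if_neg hnot0, if_neg hnot1, hpp]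
      · rw [Equiv.swap_apply_of_ne_of_ne hj0 hj1]
        have hmem : j ∈ insert i₀ A ↔ j ∈ insert i₁ A := by
          rw [mem_insert, mem_insert]
          exact ⟨fun hc => Or.inr (hc.resolve_left hj0), fun hc => Or.inr (hc.resolve_left hj1)⟩
        by_cases hj : j ∈ insert i₀ A
        · rw [if_pos hj, if_pos (hmem.mp hj)]
        · rw [if_neg hj, if_neg (fun hc => hj (hmem.mpr hc))]
    rw [hcomp, VV_comp_perm _ (swap_mem_iff h0 h1) _, HP_comp_perm _ (swap_mem_iff h0 h1) _]
  -- evaluate group 2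
  have grp2 : ∀ A ∈ E.powerset,
      VV D (qf p (insert i₁ A)) * HP α β γ D (qf p (insert i₁ A))
      = ((2 * ρ) ^ 2 * (∏ j ∈ E, (ρ ^ 2 - (p j) ^ 2) ^ 2)
          * ((1 - ρ^2*α^2) * (1 - ρ^2*β^2) * (1 - ρ^2*γ^2)))
        * (VV E (qf p A) * HP α β γ E (qf p A)) := by
    intro A hA
    set q := qf p (insert i₁ A) with hqdef
    have hq1 : q i₁ = ρ := by rw [hqdef]; unfold qf; rw [if_pos (mem_insert_self _ _)]
    have hq0 : q i₀ = -ρ := by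
      rw [hqdef]; unfold qf
      have : i₀ ∉ insert i₁ A := by
        rw [mem_insert]; rintro (hc | hc)
        · exact h01 hc
        · exact (hsub hA).1 hc
      rw [if_neg this, hpp]
    have hqE : ∀ j ∈ E, q j = qf p A j := by
      intro j hj
      have hj1 : j ≠ i₁ := fun hc => hE1 (hc ▸ hj)
      rw [hqdef]; unfold qf
      have hmem : j ∈ insert i₁ A ↔ j ∈ A := by
        rw [mem_insert]; exact ⟨fun hc => hc.resolve_left hj1, Or.inr⟩
      by_cases hjA : j ∈ A
      · rw [if_pos (hmem.mpr hjA), if_pos hjA]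
      · rw [if_neg (fun hc => hjA (hmem.mp hc)), if_neg hjA]
    have hpair : ∀ j ∈ E, (ρ - q j) ^ 2 * (-ρ - q j) ^ 2 = (ρ ^ 2 - (p j) ^ 2) ^ 2 := by
      intro j hj
      have e : (ρ - q j) ^ 2 * (-ρ - q j) ^ 2 = (ρ ^ 2 - (q j) ^ 2) ^ 2 := by ring
      rw [e, hqE j hj, qf_sq]
    have hc1 : VV E q = VV E (qf p A) := VV_congr hqE
    have hVV : VV D q
        = ((2 * ρ) ^ 2 * ∏ j ∈ E, (ρ ^ 2 - (p j) ^ 2) ^ 2) * VV E (qf p A) := by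
      have expand : VV D q = VV E q * Rw i₁ E q * ((q i₀ - q i₁) ^ 2 * Rw i₀ E q) := by
        rw [VV_erase h0 q, hD0, VV_erase (mem_insert_self i₁ E) q, erase_insert hE1]
        unfold Rw
        rw [prod_insert hE1]
      rw [expand]
      unfold Rw
      rw [hq0, hq1, hc1]
      have key : (∏ j ∈ E, (ρ - q j) ^ 2) * (∏ j ∈ E, (-ρ - q j) ^ 2)
          = ∏ j ∈ E, (ρ ^ 2 - (p j) ^ 2) ^ 2 := by
        rw [← prod_mul_distrib]; exact prod_congr rfl hpair
      linear_combination VV E (qf p A) * 4 * ρ^2 * key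
    have hGf : ∀ a b c : ℝ, ∏ j ∈ D, Gf a b c (q j)
        = (Gf a b c ρ * Gf a b c (-ρ)) * ∏ j ∈ E, Gf a b c (qf p A j) := by
      intro a b c
      rw [hD, prod_insert hi₀notin, prod_insert hE1, hq0, hq1]
      rw [prod_congr rfl (fun j hj => by rw [hqE j hj])]
      ring
    have hHP : HP α β γ D q
        = ((1 - ρ^2*α^2) * (1 - ρ^2*β^2) * (1 - ρ^2*γ^2)) * HP α β γ E (qf p A) := by
      unfold HP
      rw [hGf α β γ, hGf β α γ, hGf γ α β]
      unfold Gf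
      ring
    rw [hVV, hHP]
    ring
  -- assemble
  have S1 : ∑ A ∈ E.powerset, VV D (qf p A) * HP α β γ D (qf p A) = 0 :=
    sum_eq_zero grp1
  have S4 : ∑ A ∈ E.powerset,
      VV D (qf p (insert i₀ (insert i₁ A))) * HP α β γ D (qf p (insert i₀ (insert i₁ A))) = 0 :=
    sum_eq_zero grp4
  have S2 : ∑ A ∈ E.powerset, VV D (qf p (insert i₁ A)) * HP α β γ D (qf p (insert i₁ A))
      = ((2 * ρ) ^ 2 * (∏ j ∈ E, (ρ ^ 2 - (p j) ^ 2) ^ 2)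
          * ((1 - ρ^2*α^2) * (1 - ρ^2*β^2) * (1 - ρ^2*γ^2))) * coreSum α β γ E p := by
    unfold coreSum; rw [mul_sum]; exact sum_congr rfl grp2
  have S3 : ∑ A ∈ E.powerset, VV D (qf p (insert i₀ A)) * HP α β γ D (qf p (insert i₀ A))
      = ∑ A ∈ E.powerset, VV D (qf p (insert i₁ A)) * HP α β γ D (qf p (insert i₁ A)) :=
    sum_congr rfl grp23
  rw [S1, S3, S2, h2, mul_zero, add_zero, zero_add]
  rw [S4, add_zero]

lemma coeff_comp_neg_X (p : Polynomial ℝ) (k : ℕ) :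
    (p.comp (-X)).coeff k = (-1) ^ k * p.coeff k := by
  induction p using Polynomial.induction_on' with
  | add p q hp hq => rw [add_comp, coeff_add, hp, hq, coeff_add]; ring
  | monomial n a =>
    rw [← C_mul_X_pow_eq_monomial, mul_comp, C_comp, pow_comp, X_comp]
    rw [show ((-X : Polynomial ℝ)) ^ n = C ((-1:ℝ) ^ n) * X ^ n by
      rw [neg_pow, C_pow, C_neg, C_1]]
    rw [← mul_assoc, ← C_mul, coeff_C_mul, coeff_C_mul, coeff_X_pow]
    by_cases h : k = n
    · subst h; ring
    · simp [h]

lemma odd_coeff_zero {p : Polynomial ℝ} (hp : p.comp (-X) = p) {k : ℕ} (hk : Odd k) :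
    p.coeff k = 0 := by
  have := coeff_comp_neg_X p k
  rw [hp] at this
  rw [hk.neg_one_pow] at this
  linarith

/-- abstract factorization of an even polynomial function with prescribed roots -/
lemma poly_vanish {N : ℕ} (E : Finset (Fin N)) (u : Fin N → ℝ)
    (hu : ∀ j ∈ E, u j ≠ 0)
    (huu : ∀ j ∈ E, ∀ k ∈ E, j ≠ k → (u j) ^ 2 ≠ (u k) ^ 2)
    (Φ : ℝ → ℝ) (Qp : Polynomial ℝ) (heq : ∀ t, Qp.eval t = Φ t)
    (hdeg : Qp.natDegree ≤ 2 * E.card + 3)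
    (heven : ∀ t, Φ (-t) = Φ t) (h0 : Φ 0 = 0) (hr : ∀ j ∈ E, Φ (u j) = 0) :
    ∃ c : ℝ, ∀ t, Φ t = c * (t ^ 2 * ∏ j ∈ E, (t ^ 2 - (u j) ^ 2)) := by
  classical
  set r := E.card with hr_def
  -- evenness of the polynomial
  have hQeven : Qp.comp (-X) = Qp := by
    apply Polynomial.funext
    intro t
    rw [eval_comp]
    simp only [eval_neg, eval_X]
    rw [heq, heq, heven]
  -- the comparison polynomial
  set B : Polynomial ℝ := X ^ 2 * ∏ j ∈ E, (X ^ 2 - C ((u j) ^ 2)) with hB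
  have hBfac_monic : ∀ j ∈ E, (X ^ 2 - C ((u j) ^ 2) : Polynomial ℝ).Monic :=
    fun j _ => monic_X_pow_sub_C _ (by norm_num)
  have hBmonic : B.Monic := (monic_X_pow 2).mul (monic_prod_of_monic _ _ hBfac_monic)
  have hBdeg : B.natDegree = 2 * r + 2 := by
    rw [hB, (monic_X_pow 2).natDegree_mul (monic_prod_of_monic _ _ hBfac_monic),
      natDegree_prod_of_monic _ _ hBfac_monic]
    have : ∀ j ∈ E, (X ^ 2 - C ((u j) ^ 2) : Polynomial ℝ).natDegree = 2 :=
      fun j _ => natDegree_X_pow_sub_C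
    rw [sum_congr rfl this, sum_const, natDegree_X_pow, smul_eq_mul]
    omega
  have hBeven : B.comp (-X) = B := by
    rw [hB, mul_comp, pow_comp, X_comp, Polynomial.prod_comp]
    congr 1
    · ring
    · refine prod_congr rfl fun j _ => ?_
      rw [sub_comp, pow_comp, X_comp, C_comp]
      congr 1
      ring
  set c := Qp.coeff (2 * r + 2) with hc
  set R := Qp - C c * B with hR
  have hReven : R.comp (-X) = R := by
    rw [hR, sub_comp, mul_comp, C_comp, hQeven, hBeven]
  have hRdeg : R.natDegree ≤ 2 * r := by
    rw [natDegree_le_iff_coeff_eq_zero]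
    intro M hM
    have hcase : M = 2 * r + 1 ∨ M = 2 * r + 2 ∨ M = 2 * r + 3 ∨ 2 * r + 3 < M := by omega
    rcases hcase with h | h | h | h
    · exact odd_coeff_zero hReven (h ▸ ⟨r, by omega⟩)
    · rw [hR, coeff_sub, coeff_C_mul, h, ← hBdeg, hBmonic.coeff_natDegree, mul_one, hBdeg, ← h,
        h, ← hc]
      ring
    · exact odd_coeff_zero hReven (h ▸ ⟨r + 1, by omega⟩)
    · rw [hR, coeff_sub, coeff_C_mul]
      rw [coeff_eq_zero_of_natDegree_lt (lt_of_le_of_lt hdeg (by omega)),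
        coeff_eq_zero_of_natDegree_lt (by omega : B.natDegree < M)]
      ring
  -- the root set
  set Z : Finset ℝ := insert 0 ((E.image u) ∪ (E.image (fun j => -(u j)))) with hZ
  have huinj : Set.InjOn u E := by
    intro j hj k hk hjk
    by_contra hne
    exact huu j hj k hk hne (by rw [hjk])
  have hneginj : Set.InjOn (fun j => -(u j)) E := by
    intro j hj k hk hjk
    dsimp at hjk
    exact huinj hj hk (neg_injective hjk)
  have hdisj : Disjoint (E.image u) (E.image (fun j => -(u j))) := by
    rw [disjoint_left]
    intro a ha hb
    rcases mem_image.mp ha with ⟨j, hj, rfl⟩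
    rcases mem_image.mp hb with ⟨k, hk, hneg⟩
    try dsimp at hneg
    rcases eq_or_ne j k with rfl | hne
    · have : u j = 0 := by linarith [hneg]
      exact hu j hj this
    · exact huu j hj k hk hne (by linear_combination (u j - u k) * hneg.symm)
  have h0notin : (0:ℝ) ∉ (E.image u) ∪ (E.image (fun j => -(u j))) := by
    rw [mem_union]
    rintro (h | h)
    · rcases mem_image.mp h with ⟨j, hj, hju⟩
      exact hu j hj hju
    · rcases mem_image.mp h with ⟨j, hj, hju⟩
      exact hu j hj (by linarith [hju])
  have hZcard : Z.card = 2 * r + 1 := by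
    rw [hZ, card_insert_of_notMem h0notin, card_union_of_disjoint hdisj,
      card_image_of_injOn huinj, card_image_of_injOn hneginj]
    omega
  -- evaluations of R at Z vanish
  have hQroots : ∀ x ∈ Z, Qp.eval x = 0 := by
    intro x hx
    rw [heq]
    rw [hZ, mem_insert, mem_union] at hx
    rcases hx with rfl | hx | hx
    · exact h0
    · rcases mem_image.mp hx with ⟨j, hj, rfl⟩
      exact hr j hj
    · rcases mem_image.mp hx with ⟨j, hj, rfl⟩
      rw [heven]
      exact hr j hj
  have hBroots : ∀ x ∈ Z, B.eval x = 0 := by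
    intro x hx
    rw [hZ, mem_insert, mem_union] at hx
    rw [hB, eval_mul, eval_pow, eval_X, eval_prod]
    rcases hx with rfl | hx | hx
    · norm_num
    · rcases mem_image.mp hx with ⟨j, hj, rfl⟩
      rw [prod_eq_zero hj (by simp), mul_zero]
    · rcases mem_image.mp hx with ⟨j, hj, rfl⟩
      rw [prod_eq_zero hj (by simp), mul_zero]
  have hRzero : R = 0 := by
    refine eq_zero_of_natDegree_lt_card_of_eval_eq_zero' R Z ?_ ?_
    · intro x hx
      rw [hR, eval_sub, eval_mul, eval_C, hQroots x hx, hBroots x hx]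
      ring
    · rw [hZcard]; omega
  have hQB : Qp = C c * B := by
    have := sub_eq_zero.mp hRzero
    exact this
  refine ⟨c, fun t => ?_⟩
  rw [← heq, hQB, eval_mul, eval_C, hB, eval_mul, eval_pow, eval_X, eval_prod]
  congr 2
  refine prod_congr rfl fun j _ => ?_
  rw [eval_sub, eval_pow, eval_X, eval_C]

variable {N : ℕ}

def sg (A : Finset (Fin N)) (i : Fin N) : ℝ := if i ∈ A then 1 else -1

noncomputable def GP (a b c s : ℝ) : Polynomial ℝ :=
  (1 + (C s * X) * C a) * (1 - (C s * X) * C b) * (1 - (C s * X) * C c)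

lemma GP_eval (a b c s t : ℝ) : (GP a b c s).eval t = Gf a b c (s * t) := by
  unfold GP Gf
  simp only [eval_mul, eval_add, eval_sub, eval_one, eval_C, eval_X]

lemma lin_natDegree_le (s w : ℝ) : ((C s * X) * C w : Polynomial ℝ).natDegree ≤ 1 := by
  calc ((C s * X) * C w : Polynomial ℝ).natDegree
      ≤ (C s * X).natDegree + (C w : Polynomial ℝ).natDegree := natDegree_mul_le
    _ ≤ 1 := by
        rw [natDegree_C, add_zero]
        exact le_trans (natDegree_C_mul_le s X) (le_of_eq natDegree_X)

lemma GP_natDegree_le (a b c s : ℝ) : (GP a b c s).natDegree ≤ 3 := by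
  have hpl : ∀ w : ℝ, ((1 : Polynomial ℝ) + (C s * X) * C w).natDegree ≤ 1 := fun w =>
    le_trans (natDegree_add_le _ _)
      (by rw [natDegree_one]; exact sup_le (by norm_num) (lin_natDegree_le s w))
  have hmn : ∀ w : ℝ, ((1 : Polynomial ℝ) - (C s * X) * C w).natDegree ≤ 1 := fun w =>
    le_trans (natDegree_sub_le _ _)
      (by rw [natDegree_one]; exact sup_le (by norm_num) (lin_natDegree_le s w))
  unfold GP
  refine le_trans natDegree_mul_le (le_trans (add_le_add
    (le_trans natDegree_mul_le (add_le_add (hpl a) (hmn b))) (hmn c)) (by norm_num))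

noncomputable def Qpoly (α β γ : ℝ) (D : Finset (Fin N)) (p : Fin N → ℝ) (i₀ : Fin N) : Polynomial ℝ :=
  ∑ A ∈ D.powerset,
    C (VV (D.erase i₀) (qf p A)) *
    (∏ j ∈ D.erase i₀, (C (sg A i₀) * X - C (qf p A j)) ^ 2) *
    ( C (α*(β-γ) * ∏ j ∈ D.erase i₀, Gf α β γ (qf p A j)) * GP α β γ (sg A i₀)
    + C (β*(γ-α) * ∏ j ∈ D.erase i₀, Gf β α γ (qf p A j)) * GP β α γ (sg A i₀)
    + C (γ*(α-β) * ∏ j ∈ D.erase i₀, Gf γ α β (qf p A j)) * GP γ α β (sg A i₀))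

lemma Qpoly_natDegree_le (α β γ : ℝ) (D : Finset (Fin N)) (p : Fin N → ℝ) (i₀ : Fin N) :
    (Qpoly α β γ D p i₀).natDegree ≤ 2 * (D.erase i₀).card + 3 := by
  apply natDegree_sum_le_of_forall_le
  intro A _
  calc (C (VV (D.erase i₀) (qf p A)) *
    (∏ j ∈ D.erase i₀, (C (sg A i₀) * X - C (qf p A j)) ^ 2) *
    ( C (α*(β-γ) * ∏ j ∈ D.erase i₀, Gf α β γ (qf p A j)) * GP α β γ (sg A i₀)
    + C (β*(γ-α) * ∏ j ∈ D.erase i₀, Gf β α γ (qf p A j)) * GP β α γ (sg A i₀)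
    + C (γ*(α-β) * ∏ j ∈ D.erase i₀, Gf γ α β (qf p A j)) * GP γ α β (sg A i₀))).natDegree
      ≤ (C (VV (D.erase i₀) (qf p A)) *
          (∏ j ∈ D.erase i₀, (C (sg A i₀) * X - C (qf p A j)) ^ 2)).natDegree
        + (( C (α*(β-γ) * ∏ j ∈ D.erase i₀, Gf α β γ (qf p A j)) * GP α β γ (sg A i₀)
    + C (β*(γ-α) * ∏ j ∈ D.erase i₀, Gf β α γ (qf p A j)) * GP β α γ (sg A i₀)
    + C (γ*(α-β) * ∏ j ∈ D.erase i₀, Gf γ α β (qf p A j)) * GP γ α β (sg A i₀))).natDegree :=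
        natDegree_mul_le
    _ ≤ 2 * (D.erase i₀).card + 3 := by
        gcongr
        · calc (C (VV (D.erase i₀) (qf p A)) *
              (∏ j ∈ D.erase i₀, (C (sg A i₀) * X - C (qf p A j)) ^ 2)).natDegree
              ≤ (∏ j ∈ D.erase i₀, (C (sg A i₀) * X - C (qf p A j)) ^ 2).natDegree :=
                natDegree_C_mul_le _ _
            _ ≤ ∑ j ∈ D.erase i₀, ((C (sg A i₀) * X - C (qf p A j)) ^ 2).natDegree :=
                natDegree_prod_le _ _
            _ ≤ ∑ _j ∈ D.erase i₀, 2 := by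
                apply sum_le_sum
                intro j _
                refine le_trans natDegree_pow_le ?_
                have : (C (sg A i₀) * X - C (qf p A j)).natDegree ≤ 1 := by
                  refine le_trans (natDegree_sub_le _ _) ?_
                  simp only [natDegree_C]
                  exact sup_le (le_trans (natDegree_C_mul_le _ _) (le_of_eq natDegree_X))
                    (by norm_num)
                omega
            _ = 2 * (D.erase i₀).card := by rw [sum_const, smul_eq_mul]; ring
        · refine le_trans (natDegree_add_le _ _) ?_
          refine sup_le (le_trans (natDegree_add_le _ _) (sup_le ?_ ?_)) ?_ <;>
            exact le_trans (natDegree_C_mul_le _ _) (GP_natDegree_le _ _ _ _)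

lemma Qpoly_eval (α β γ : ℝ) (D : Finset (Fin N)) (p : Fin N → ℝ) {i₀ : Fin N}
    (hi₀ : i₀ ∈ D) (t : ℝ) :
    (Qpoly α β γ D p i₀).eval t = coreSum α β γ D (Function.update p i₀ t) := by
  unfold Qpoly coreSum
  rw [eval_finset_sum]
  refine sum_congr rfl fun A hA => ?_
  have hqup : qf (Function.update p i₀ t) A = Function.update (qf p A) i₀ (sg A i₀ * t) := by
    funext j
    rcases eq_or_ne j i₀ with rfl | hj
    · by_cases h : j ∈ A <;>
        simp [qf, sg, h, Function.update_self] <;> ring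
    · simp [qf, Function.update_of_ne hj]
  rw [hqup]
  set q' : Fin N → ℝ := Function.update (qf p A) i₀ (sg A i₀ * t) with hq'
  have hq'i : q' i₀ = sg A i₀ * t := Function.update_self _ _ _
  have hq'E : ∀ j ∈ D.erase i₀, q' j = qf p A j := fun j hj =>
    Function.update_of_ne (mem_erase.mp hj).1 _ _
  have hVV : VV D q' = VV (D.erase i₀) (qf p A) * ∏ j ∈ D.erase i₀, (sg A i₀ * t - qf p A j) ^ 2 := by
    rw [VV_erase hi₀ q', VV_congr hq'E]
    congr 1
    unfold Rw
    refine prod_congr rfl fun j hj => ?_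
    rw [hq'i, hq'E j hj]
  have hHP : ∀ a b c : ℝ, ∏ j ∈ D, Gf a b c (q' j)
      = Gf a b c (sg A i₀ * t) * ∏ j ∈ D.erase i₀, Gf a b c (qf p A j) := by
    intro a b c
    rw [← mul_prod_erase D _ hi₀, hq'i]
    congr 1
    exact prod_congr rfl fun j hj => by rw [hq'E j hj]
  simp only [eval_mul, eval_add, eval_C, eval_prod, eval_pow, eval_sub, eval_X, GP_eval]
  rw [hVV]
  unfold HP
  rw [hHP, hHP, hHP]
  ring

variable {N : ℕ}

lemma VV_empty (q : Fin N → ℝ) : VV (∅ : Finset (Fin N)) q = 1 :=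
  prod_eq_one fun x _ => by simp

lemma VV_singleton (i : Fin N) (q : Fin N → ℝ) : VV ({i} : Finset (Fin N)) q = 1 :=
  prod_eq_one fun x hx => if_neg (by
    rintro ⟨h1, h2⟩
    rw [mem_singleton] at h1 h2
    exact absurd (h1.trans h2.symm) (ne_of_lt (mem_PP.mp hx)))

lemma coreSum_swap {α β γ : ℝ} {D : Finset (Fin N)} {i₀ i₁ : Fin N}
    (h0 : i₀ ∈ D) (h1 : i₁ ∈ D) (f : Fin N → ℝ) :
    coreSum α β γ D (fun j => f (Equiv.swap i₀ i₁ j)) = coreSum α β γ D f := by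
  classical
  set e := Equiv.swap i₀ i₁ with he
  have hmem : ∀ j, j ∈ D ↔ e j ∈ D := swap_mem_iff h0 h1
  have himg : ∀ A : Finset (Fin N), (A.image e).image e = A := by
    intro A
    rw [image_image, show (e : Fin N → Fin N) ∘ (e : Fin N → Fin N) = id from
      funext (fun x => Equiv.swap_apply_self i₀ i₁ x), image_id]
  have hmm : ∀ A ∈ D.powerset, A.image e ∈ D.powerset := by
    intro A hA
    rw [mem_powerset] at hA ⊢
    intro x hx
    rcases mem_image.mp hx with ⟨y, hy, rfl⟩
    exact (hmem y).mp (hA hy)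
  unfold coreSum
  refine sum_nbij' (fun A => A.image e) (fun A => A.image e) hmm hmm
    (fun A _ => himg A) (fun A _ => himg A) ?_
  intro A _
  have hq : (qf (fun j => f (e j)) A) = fun j => (qf f (A.image e)) (e j) := by
    funext j
    unfold qf
    have hiff : j ∈ A ↔ e j ∈ A.image e := (e.injective.mem_finset_image).symm
    by_cases h : j ∈ A
    · rw [if_pos h, if_pos (hiff.mp h)]
    · rw [if_neg h, if_neg (fun hc => h (hiff.mpr hc))]
  rw [hq, VV_comp_perm e hmem, HP_comp_perm e hmem]

theorem coreSum_eq_zero (α β γ : ℝ) (D : Finset (Fin N)) (p : Fin N → ℝ) :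
    coreSum α β γ D p = 0 := by
  classical
  suffices H : ∀ (m : ℕ) (D : Finset (Fin N)) (p : Fin N → ℝ),
      D.card = m → coreSum α β γ D p = 0 from H D.card D p rfl
  intro m
  induction m using Nat.strong_induction_on with
  | _ m IH =>
  intro D p hcard
  match m, hcard with
  | 0, hcard =>
    rw [card_eq_zero] at hcard
    subst hcard
    unfold coreSum
    rw [powerset_empty, sum_singleton, VV_empty]
    unfold HP
    simp only [prod_empty]
    ring
  | 1, hcard =>
    obtain ⟨i, rfl⟩ := card_eq_one.mp hcard
    unfold coreSum
    rw [← insert_empty_eq, sum_powerset_insert (notMem_empty i), powerset_empty,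
      sum_singleton, sum_singleton, insert_empty_eq]
    rw [VV_singleton, VV_singleton]
    unfold HP
    rw [prod_singleton, prod_singleton, prod_singleton, prod_singleton, prod_singleton,
      prod_singleton]
    have hq1 : qf p (∅ : Finset (Fin N)) i = -(p i) := by unfold qf; rw [if_neg (notMem_empty i)]
    have hq2 : qf p ({i} : Finset (Fin N)) i = p i := by unfold qf; rw [if_pos (mem_singleton_self i)]
    rw [hq1, hq2]
    unfold Gf
    ring
  | (m' + 2), hcard =>
  have hm2 : 2 ≤ D.card := by omega
  by_cases hz : ∃ i ∈ D, p i = 0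
  · obtain ⟨i, hiD, hpi⟩ := hz
    exact coreSum_zero_site hiD hpi
      (IH ((D.erase i).card) (by rw [card_erase_of_mem hiD]; omega) _ _ rfl)
  by_cases hsq : ∃ i ∈ D, ∃ j ∈ D, i ≠ j ∧ (p i) ^ 2 = (p j) ^ 2
  · obtain ⟨i, hi, j, hj, hij, hsq2⟩ := hsq
    have hjDi : j ∈ D.erase i := mem_erase.mpr ⟨hij.symm, hj⟩
    have hlt : ((D.erase i).erase j).card < m' + 2 := by
      rw [card_erase_of_mem hjDi, card_erase_of_mem hi]; omega
    rcases sq_eq_sq_iff_eq_or_eq_neg.mp hsq2 with h | h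
    · exact coreSum_pair hij hi hj h (IH _ hlt _ _ rfl)
    · rw [← coreSum_flip p i]
      refine coreSum_pair hij hi hj ?_ (IH _ hlt _ _ rfl)
      rw [Function.update_self, Function.update_of_ne (Ne.symm hij)]
      linarith [h]
  -- generic case
  push_neg at hz hsq
  obtain ⟨i₀, hi₀, i₁, hi₁, h01⟩ := one_lt_card.mp (by omega : 1 < D.card)
  have factor : ∀ i ∈ D, ∀ pp : Fin N → ℝ, (∀ j ∈ D.erase i, pp j ≠ 0) →
      (∀ j ∈ D.erase i, ∀ k ∈ D.erase i, j ≠ k → (pp j) ^ 2 ≠ (pp k) ^ 2) →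
      ∃ c : ℝ, ∀ s, coreSum α β γ D (Function.update pp i s)
        = c * (s ^ 2 * ∏ j ∈ D.erase i, (s ^ 2 - (pp j) ^ 2)) := by
    intro i hi pp hnz hds
    refine poly_vanish (D.erase i) pp hnz hds
      (fun t => coreSum α β γ D (Function.update pp i t)) (Qpoly α β γ D pp i)
      (fun t => Qpoly_eval α β γ D pp hi t) (Qpoly_natDegree_le α β γ D pp i) ?_ ?_ ?_
    · intro t
      show coreSum α β γ D (Function.update pp i (-t)) = coreSum α β γ D (Function.update pp i t)
      have h1 : Function.update pp i (-t)
          = Function.update (Function.update pp i t) i (-(Function.update pp i t i)) := by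
        rw [Function.update_self, Function.update_idem]
      rw [h1, coreSum_flip]
    · refine coreSum_zero_site hi (Function.update_self _ _ _) ?_
      exact IH ((D.erase i).card) (by rw [card_erase_of_mem hi]; omega) _ _ rfl
    · intro j hj
      have hji : j ≠ i := (mem_erase.mp hj).1
      have hjD : j ∈ D := (mem_erase.mp hj).2
      refine coreSum_pair (Ne.symm hji) hi hjD ?_ ?_
      · rw [Function.update_self, Function.update_of_ne hji]
      · refine IH _ ?_ _ _ rfl
        rw [card_erase_of_mem (mem_erase.mpr ⟨hji, hjD⟩), card_erase_of_mem hi]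
        omega
  set E2 : Finset (Fin N) := (D.erase i₀).erase i₁ with hE2
  set t₀ : ℝ := p i₁ with ht₀
  set s₁ : ℝ := (∑ j ∈ D, |p j|) + 1 with hs₁
  set s₂ : ℝ := s₁ + 1 with hs₂
  set P2 : ℝ → ℝ := fun x => ∏ j ∈ E2, (x ^ 2 - (p j) ^ 2) with hP2
  have habs : ∀ j ∈ D, |p j| < s₁ := by
    intro j hj
    have h1 : |p j| ≤ ∑ k ∈ D, |p k| := single_le_sum (fun k _ => abs_nonneg (p k)) hj
    rw [hs₁]; linarith
  have hs₁pos : 0 < s₁ := by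
    have : (0:ℝ) ≤ ∑ k ∈ D, |p k| := sum_nonneg (fun k _ => abs_nonneg (p k))
    rw [hs₁]; linarith
  have hs₂pos : 0 < s₂ := by rw [hs₂]; linarith
  have hs₁lt₂ : s₁ < s₂ := by rw [hs₂]; linarith
  have hsq₁ : ∀ j ∈ D, (p j) ^ 2 < s₁ ^ 2 := by
    intro j hj
    have h1 := habs j hj
    nlinarith [sq_abs (p j), abs_nonneg (p j)]
  have hsq₂ : ∀ j ∈ D, (p j) ^ 2 < s₂ ^ 2 := by
    intro j hj
    have h1 := hsq₁ j hj
    nlinarith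
  have hd12 : s₁ ^ 2 < s₂ ^ 2 := by nlinarith
  -- memberships
  have hi₁e : i₁ ∈ D.erase i₀ := mem_erase.mpr ⟨Ne.symm h01, hi₁⟩
  have hi₀e : i₀ ∈ D.erase i₁ := mem_erase.mpr ⟨h01, hi₀⟩
  have hE2sub : ∀ j ∈ E2, j ∈ D ∧ j ≠ i₀ ∧ j ≠ i₁ := by
    intro j hj
    rw [hE2, mem_erase, mem_erase] at hj
    exact ⟨hj.2.2, hj.2.1, hj.1⟩
  -- nonvanishing of P2 at our points
  have hP2t₀ : P2 t₀ ≠ 0 := by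
    rw [hP2]
    refine prod_ne_zero_iff.mpr fun j hj => ?_
    have h := hE2sub j hj
    exact sub_ne_zero.mpr (hsq i₁ hi₁ j h.1 (Ne.symm h.2.2))
  have hP2s₁ : P2 s₁ ≠ 0 := by
    rw [hP2]
    refine prod_ne_zero_iff.mpr fun j hj => ?_
    exact sub_ne_zero.mpr (ne_of_gt (by linarith [hsq₁ j (hE2sub j hj).1]))
  have hP2s₂ : P2 s₂ ≠ 0 := by
    rw [hP2]
    refine prod_ne_zero_iff.mpr fun j hj => ?_
    exact sub_ne_zero.mpr (ne_of_gt (by linarith [hsq₂ j (hE2sub j hj).1]))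
  have ht₀ne : t₀ ≠ 0 := hz i₁ hi₁
  have ht₀sq₁ : t₀ ^ 2 < s₁ ^ 2 := hsq₁ i₁ hi₁
  have ht₀sq₂ : t₀ ^ 2 < s₂ ^ 2 := hsq₂ i₁ hi₁
  -- product splittings
  have S0 : ∀ s : ℝ, ∏ j ∈ D.erase i₀, (s ^ 2 - (p j) ^ 2) = (s ^ 2 - t₀ ^ 2) * P2 s := by
    intro s
    rw [← mul_prod_erase (D.erase i₀) _ hi₁e, ← hE2, ht₀, hP2]
  have S1b : ∀ (sk t : ℝ), ∏ j ∈ D.erase i₁, (t ^ 2 - ((Function.update p i₀ sk) j) ^ 2)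
      = (t ^ 2 - sk ^ 2) * P2 t := by
    intro sk t
    rw [← mul_prod_erase (D.erase i₁) _ hi₀e, Function.update_self]
    congr 1
    rw [show (D.erase i₁).erase i₀ = E2 from erase_right_comm, hP2]
    refine prod_congr rfl fun j hj => ?_
    rw [Function.update_of_ne (hE2sub j hj).2.1]
  have S0a : ∀ (sk s' : ℝ), ∏ j ∈ D.erase i₀, (s' ^ 2 - ((Function.update p i₁ sk) j) ^ 2)
      = (s' ^ 2 - sk ^ 2) * P2 s' := by
    intro sk s'
    rw [← mul_prod_erase (D.erase i₀) _ hi₁e, Function.update_self]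
    congr 1
    rw [← hE2, hP2]
    refine prod_congr rfl fun j hj => ?_
    rw [Function.update_of_ne (hE2sub j hj).2.2]
  -- the four factorization instances
  have hcondp : (∀ j ∈ D.erase i₀, p j ≠ 0) ∧
      (∀ j ∈ D.erase i₀, ∀ k ∈ D.erase i₀, j ≠ k → (p j) ^ 2 ≠ (p k) ^ 2) :=
    ⟨fun j hj => hz j (mem_erase.mp hj).2,
     fun j hj k hk hjk => hsq j (mem_erase.mp hj).2 k (mem_erase.mp hk).2 hjk⟩
  have hcondup : ∀ (i iv : Fin N), iv ≠ i → iv ∈ D → ∀ s : ℝ, s ≠ 0 →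
      (∀ j ∈ D, s ^ 2 ≠ (p j) ^ 2) →
      (∀ j ∈ D.erase i, (Function.update p iv s) j ≠ 0) ∧
      (∀ j ∈ D.erase i, ∀ k ∈ D.erase i, j ≠ k →
        ((Function.update p iv s) j) ^ 2 ≠ ((Function.update p iv s) k) ^ 2) := by
    intro i iv hiiv hivD s hs hsd
    constructor
    · intro j hj
      rcases eq_or_ne j iv with rfl | hjiv
      · rw [Function.update_self]; exact hs
      · rw [Function.update_of_ne hjiv]; exact hz j (mem_erase.mp hj).2
    · intro j hj k hk hjk
      by_cases hjiv : j = iv <;> by_cases hkiv : k = iv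
      · exact absurd (hjiv.trans hkiv.symm) hjk
      · rw [hjiv, Function.update_self, Function.update_of_ne hkiv]
        exact hsd k (mem_erase.mp hk).2
      · rw [hkiv, Function.update_self, Function.update_of_ne hjiv]
        exact fun hc => (hsd j (mem_erase.mp hj).2) hc.symm
      · rw [Function.update_of_ne hjiv, Function.update_of_ne hkiv]
        exact hsq j (mem_erase.mp hj).2 k (mem_erase.mp hk).2 hjk
  have hs₁d : ∀ j ∈ D, s₁ ^ 2 ≠ (p j) ^ 2 := fun j hj => ne_of_gt (hsq₁ j hj)
  have hs₂d : ∀ j ∈ D, s₂ ^ 2 ≠ (p j) ^ 2 := fun j hj => ne_of_gt (hsq₂ j hj)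
  obtain ⟨a0, ha0⟩ := factor i₀ hi₀ p hcondp.1 hcondp.2
  obtain ⟨b1, hb1⟩ := factor i₁ hi₁ (Function.update p i₀ s₁)
    (hcondup i₁ i₀ h01 hi₀ s₁ (ne_of_gt hs₁pos) hs₁d).1
    (hcondup i₁ i₀ h01 hi₀ s₁ (ne_of_gt hs₁pos) hs₁d).2
  obtain ⟨b2, hb2⟩ := factor i₁ hi₁ (Function.update p i₀ s₂)
    (hcondup i₁ i₀ h01 hi₀ s₂ (ne_of_gt hs₂pos) hs₂d).1
    (hcondup i₁ i₀ h01 hi₀ s₂ (ne_of_gt hs₂pos) hs₂d).2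
  obtain ⟨a1, ha1⟩ := factor i₀ hi₀ (Function.update p i₁ s₁)
    (hcondup i₀ i₁ (Ne.symm h01) hi₁ s₁ (ne_of_gt hs₁pos) hs₁d).1
    (hcondup i₀ i₁ (Ne.symm h01) hi₁ s₁ (ne_of_gt hs₁pos) hs₁d).2
  -- equation E1 : pair (t₀, s₂)
  have hupd2 : ∀ sk : ℝ, Function.update (Function.update p i₀ sk) i₁ t₀
      = Function.update p i₀ sk := by
    intro sk
    conv_lhs => rw [ht₀, show p i₁ = (Function.update p i₀ sk) i₁ from
      (Function.update_of_ne (Ne.symm h01) _ _).symm]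
    rw [Function.update_eq_self]
  have E1 : a0 * (s₂ ^ 2 * ((s₂ ^ 2 - t₀ ^ 2) * P2 s₂))
      = b2 * (t₀ ^ 2 * ((t₀ ^ 2 - s₂ ^ 2) * P2 t₀)) := by
    have l1 := ha0 s₂
    rw [S0 s₂] at l1
    have l2 := hb2 t₀
    rw [S1b s₂ t₀, hupd2 s₂] at l2
    rw [← l1, ← l2]
  have E2eq : a0 * (s₁ ^ 2 * ((s₁ ^ 2 - t₀ ^ 2) * P2 s₁))
      = b1 * (t₀ ^ 2 * ((t₀ ^ 2 - s₁ ^ 2) * P2 t₀)) := by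
    have l1 := ha0 s₁
    rw [S0 s₁] at l1
    have l2 := hb1 t₀
    rw [S1b s₁ t₀, hupd2 s₁] at l2
    rw [← l1, ← l2]
  have E3 : a1 * (s₂ ^ 2 * ((s₂ ^ 2 - s₁ ^ 2) * P2 s₂))
      = b2 * (s₁ ^ 2 * ((s₁ ^ 2 - s₂ ^ 2) * P2 s₁)) := by
    have l1 := ha1 s₂
    rw [S0a s₁ s₂] at l1
    have l2 := hb2 s₁
    rw [S1b s₂ s₁] at l2
    rw [Function.update_comm (Ne.symm h01) s₁ s₂ p] at l1
    rw [← l1, ← l2]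
  have E4 : a1 = b1 := by
    have harg : (fun j => (Function.update (Function.update p i₀ s₁) i₁ s₂) (Equiv.swap i₀ i₁ j))
        = Function.update (Function.update p i₁ s₁) i₀ s₂ := by
      funext j
      rcases eq_or_ne j i₀ with rfl | hj0
      · rw [Equiv.swap_apply_left, Function.update_self, Function.update_self]
      rcases eq_or_ne j i₁ with rfl | hj1
      · rw [Equiv.swap_apply_right, Function.update_of_ne h01, Function.update_self,
          Function.update_of_ne (Ne.symm h01), Function.update_self]
      · rw [Equiv.swap_apply_of_ne_of_ne hj0 hj1, Function.update_of_ne hj1,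
          Function.update_of_ne hj0, Function.update_of_ne hj0, Function.update_of_ne hj1]
    have l1 := ha1 s₂
    rw [S0a s₁ s₂] at l1
    have l2 := hb1 s₂
    rw [S1b s₁ s₂] at l2
    have hsw := coreSum_swap (α := α) (β := β) (γ := γ) hi₀ hi₁ (Function.update (Function.update p i₀ s₁) i₁ s₂)
    rw [harg] at hsw
    have hkey : a1 * (s₂ ^ 2 * ((s₂ ^ 2 - s₁ ^ 2) * P2 s₂))
        = b1 * (s₂ ^ 2 * ((s₂ ^ 2 - s₁ ^ 2) * P2 s₂)) := by
      rw [← l1, ← l2, ← hsw]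
    have hnz2 : s₂ ^ 2 * ((s₂ ^ 2 - s₁ ^ 2) * P2 s₂) ≠ 0 :=
      mul_ne_zero (pow_ne_zero _ (ne_of_gt hs₂pos))
        (mul_ne_zero (sub_ne_zero.mpr (ne_of_gt hd12)) hP2s₂)
    exact mul_right_cancel₀ hnz2 hkey
  -- cancel the nonzero difference factors
  have hd2ne : s₂ ^ 2 - t₀ ^ 2 ≠ 0 := sub_ne_zero.mpr (ne_of_gt ht₀sq₂)
  have hd1ne : s₁ ^ 2 - t₀ ^ 2 ≠ 0 := sub_ne_zero.mpr (ne_of_gt ht₀sq₁)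
  have hd12ne : s₂ ^ 2 - s₁ ^ 2 ≠ 0 := sub_ne_zero.mpr (ne_of_gt hd12)
  set T : ℝ := t₀ ^ 2 * P2 t₀ with hT
  set U₁ : ℝ := s₁ ^ 2 * P2 s₁ with hU₁
  set U₂ : ℝ := s₂ ^ 2 * P2 s₂ with hU₂
  have hTne : T ≠ 0 := mul_ne_zero (pow_ne_zero _ ht₀ne) hP2t₀
  have hU₁ne : U₁ ≠ 0 := mul_ne_zero (pow_ne_zero _ (ne_of_gt hs₁pos)) hP2s₁
  have hU₂ne : U₂ ≠ 0 := mul_ne_zero (pow_ne_zero _ (ne_of_gt hs₂pos)) hP2s₂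
  have r1 : a0 * U₂ = -(b2 * T) := by
    have h := E1
    have h' : (a0 * U₂) * (s₂ ^ 2 - t₀ ^ 2) = (-(b2 * T)) * (s₂ ^ 2 - t₀ ^ 2) := by
      rw [hU₂, hT]; linear_combination h
    exact mul_right_cancel₀ hd2ne h'
  have r2 : a0 * U₁ = -(b1 * T) := by
    have h' : (a0 * U₁) * (s₁ ^ 2 - t₀ ^ 2) = (-(b1 * T)) * (s₁ ^ 2 - t₀ ^ 2) := by
      rw [hU₁, hT]; linear_combination E2eq
    exact mul_right_cancel₀ hd1ne h'
  have r3 : b1 * U₂ = -(b2 * U₁) := by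
    have h' : (b1 * U₂) * (s₂ ^ 2 - s₁ ^ 2) = (-(b2 * U₁)) * (s₂ ^ 2 - s₁ ^ 2) := by
      have E3' := E3
      rw [E4] at E3'
      rw [hU₂, hU₁]; linear_combination E3'
    exact mul_right_cancel₀ hd12ne h'
  have key : a0 * (U₁ * U₂) * 2 = 0 := by
    linear_combination U₂ * r2 - T * r3 + U₁ * r1
  have ha0z : a0 = 0 := by
    by_contra ha0
    exact (mul_ne_zero (mul_ne_zero ha0 (mul_ne_zero hU₁ne hU₂ne)) two_ne_zero) key
  have hfin := ha0 (p i₀)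
  rw [Function.update_eq_self] at hfin
  rw [hfin, ha0z, zero_mul]

variable {N : ℕ}

lemma cross_merge (g : Fin N → Fin N → ℝ) (hg : ∀ i j, g i j = g j i)
    {I A : Finset (Fin N)} (hIA : Disjoint I A) :
    (∏ i ∈ I, ∏ j ∈ A.filter (fun j => i < j), g i j)
      * (∏ i ∈ A, ∏ j ∈ I.filter (fun j => i < j), g i j)
    = ∏ i ∈ I, ∏ j ∈ A, g i j := by
  have h1 : (∏ i ∈ I, ∏ j ∈ A.filter (fun j => i < j), g i j)
      = ∏ x ∈ I ×ˢ A, (if x.1 < x.2 then g x.1 x.2 else 1) := by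
    rw [prod_product' I A (fun i j => if i < j then g i j else 1)]
    exact prod_congr rfl fun i _ => prod_filter _ _
  have h2 : (∏ i ∈ A, ∏ j ∈ I.filter (fun j => i < j), g i j)
      = ∏ x ∈ I ×ˢ A, (if x.2 < x.1 then g x.1 x.2 else 1) := by
    have e : (∏ i ∈ A, ∏ j ∈ I.filter (fun j => i < j), g i j)
        = ∏ x ∈ A ×ˢ I, (if x.1 < x.2 then g x.1 x.2 else 1) := by
      rw [prod_product' A I (fun i j => if i < j then g i j else 1)]
      exact prod_congr rfl fun i _ => prod_filter _ _
    rw [e]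
    refine prod_nbij' (fun x => (x.2, x.1)) (fun x => (x.2, x.1)) ?_ ?_ ?_ ?_ ?_
    · intro x hx; rw [mem_product] at hx ⊢; exact ⟨hx.2, hx.1⟩
    · intro x hx; rw [mem_product] at hx ⊢; exact ⟨hx.2, hx.1⟩
    · intro x _; rfl
    · intro x _; rfl
    · intro x _
      dsimp only
      by_cases h : x.1 < x.2
      · rw [if_pos h, if_pos h, hg]
      · rw [if_neg h, if_neg h]
  rw [h1, h2, ← prod_mul_distrib, ← prod_product' I A (fun i j => g i j)]
  refine prod_congr rfl fun x hx => ?_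
  have hne : x.1 ≠ x.2 := by
    rw [mem_product] at hx
    exact fun h => (disjoint_left.mp hIA hx.1) (h ▸ hx.2)
  rcases lt_trichotomy x.1 x.2 with h | h | h
  · rw [if_pos h, if_neg (asymm h), mul_one]
  · exact absurd h hne
  · rw [if_neg (asymm h), if_pos h, one_mul]

lemma prod_pairs_union (g : Fin N → Fin N → ℝ) (hg : ∀ i j, g i j = g j i)
    {I A : Finset (Fin N)} (hIA : Disjoint I A) :
    (∏ i ∈ I ∪ A, ∏ j ∈ (I ∪ A).filter (fun j => i < j), g i j)
    = ((∏ i ∈ I, ∏ j ∈ I.filter (fun j => i < j), g i j)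
      * (∏ i ∈ A, ∏ j ∈ A.filter (fun j => i < j), g i j))
      * (∏ i ∈ I, ∏ j ∈ A, g i j) := by
  rw [prod_union hIA]
  have hdisjf : ∀ (i : Fin N), Disjoint (I.filter (fun j => i < j)) (A.filter (fun j => i < j)) :=
    fun i => disjoint_filter_filter hIA
  have e1 : (∏ i ∈ I, ∏ j ∈ (I ∪ A).filter (fun j => i < j), g i j)
      = (∏ i ∈ I, ∏ j ∈ I.filter (fun j => i < j), g i j)
        * (∏ i ∈ I, ∏ j ∈ A.filter (fun j => i < j), g i j) := by
    rw [← prod_mul_distrib]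
    exact prod_congr rfl fun i _ => by rw [filter_union, prod_union (hdisjf i)]
  have e2 : (∏ i ∈ A, ∏ j ∈ (I ∪ A).filter (fun j => i < j), g i j)
      = (∏ i ∈ A, ∏ j ∈ I.filter (fun j => i < j), g i j)
        * (∏ i ∈ A, ∏ j ∈ A.filter (fun j => i < j), g i j) := by
    rw [← prod_mul_distrib]
    exact prod_congr rfl fun i _ => by rw [filter_union, prod_union (hdisjf i)]
  rw [e1, e2, ← cross_merge g hg hIA]
  ring

lemma prod_ite_mem_univ (D : Finset (Fin N)) (F : Fin N → ℝ) :
    ∏ j ∈ (univ : Finset (Fin N)), (if j ∈ D then F j else 1) = ∏ j ∈ D, F j := by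
  rw [prod_ite_mem, univ_inter]

lemma VV_nested (D : Finset (Fin N)) (q : Fin N → ℝ) :
    VV D q = ∏ i ∈ D, ∏ j ∈ D.filter (fun j => i < j), (q i - q j) ^ 2 := by
  unfold VV PP
  rw [prod_filter, ← univ_product_univ,
    prod_product' univ univ (fun i j => if i < j then (if i ∈ D ∧ j ∈ D then (q i - q j) ^ 2 else 1) else 1)]
  have hpoint : ∀ i j : Fin N,
      (if i < j then (if i ∈ D ∧ j ∈ D then (q i - q j) ^ 2 else 1) else 1)
      = (if i ∈ D then (if j ∈ D then (if i < j then (q i - q j) ^ 2 else 1) else 1) else 1) := by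
    intro i j
    by_cases h1 : i < j <;> by_cases h2 : i ∈ D <;> by_cases h3 : j ∈ D <;> simp [h1, h2, h3]
  rw [prod_congr rfl fun i _ => prod_congr rfl fun j _ => hpoint i j]
  have hpull : ∀ i : Fin N, (∏ j ∈ univ,
      (if i ∈ D then (if j ∈ D then (if i < j then (q i - q j) ^ 2 else 1) else 1) else 1))
      = (if i ∈ D then ∏ j ∈ univ, (if j ∈ D then (if i < j then (q i - q j) ^ 2 else 1) else 1)
          else 1) := by
    intro i
    split_ifs with h
    · rfl
    · exact prod_const_one
  rw [prod_congr rfl fun i _ => hpull i]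
  rw [prod_ite_mem_univ D (fun i => ∏ j ∈ univ, (if j ∈ D then (if i < j then (q i - q j) ^ 2 else 1) else 1))]
  refine prod_congr rfl fun i _ => ?_
  rw [prod_ite_mem_univ D (fun j => (if i < j then (q i - q j) ^ 2 else 1))]
  rw [← prod_filter]

/-- reindexing pairs of subsets by (intersection, symmetric-difference support, first part) -/
lemma pair_reindex (f : Finset (Fin N) → Finset (Fin N) → ℝ) :
    (∑ S : Finset (Fin N), ∑ T : Finset (Fin N), f S T)
    = ∑ ID ∈ (Finset.univ ×ˢ Finset.univ).filter
        (fun ID : Finset (Fin N) × Finset (Fin N) => Disjoint ID.1 ID.2),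
      ∑ A ∈ ID.2.powerset, f (ID.1 ∪ A) (ID.1 ∪ (ID.2 \ A)) := by
  classical
  rw [← sum_product' univ univ (fun S T => f S T)]
  rw [sum_sigma' ((Finset.univ ×ˢ Finset.univ).filter
        (fun ID : Finset (Fin N) × Finset (Fin N) => Disjoint ID.1 ID.2))
      (fun ID => ID.2.powerset)
      (fun ID A => f (ID.1 ∪ A) (ID.1 ∪ (ID.2 \ A)))]
  refine (sum_nbij' (i := fun (x : (_ : Finset (Fin N) × Finset (Fin N)) × Finset (Fin N)) =>
      (x.1.1 ∪ x.2, x.1.1 ∪ (x.1.2 \ x.2)))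
    (j := fun ST => ⟨(ST.1 ∩ ST.2, (ST.1 ∪ ST.2) \ (ST.1 ∩ ST.2)), ST.1 \ ST.2⟩)
    ?_ ?_ ?_ ?_ ?_).symm
  · intro x _
    rw [mem_product]
    exact ⟨mem_univ _, mem_univ _⟩
  · intro ST _
    rw [mem_sigma, mem_filter, mem_product]
    refine ⟨⟨⟨mem_univ _, mem_univ _⟩, ?_⟩, ?_⟩
    · rw [disjoint_left]
      intro x hx hc
      rw [mem_sdiff] at hc
      exact hc.2 hx
    · rw [mem_powerset]
      intro x hx
      rw [mem_sdiff] at hx ⊢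
      rw [mem_union, mem_inter]
      exact ⟨Or.inl hx.1, fun hc => hx.2 hc.2⟩
  · rintro ⟨⟨I, D⟩, A⟩ hx
    rw [mem_sigma, mem_filter, mem_product, mem_powerset] at hx
    obtain ⟨⟨_, hdisj⟩, hsub⟩ := hx
    have hd : ∀ y, y ∈ I → y ∉ D := fun y hy => disjoint_left.mp hdisj hy
    have hAD : ∀ y, y ∈ A → y ∈ D := fun y hy => hsub hy
    dsimp only
    have e1 : (I ∪ A) ∩ (I ∪ (D \ A)) = I := by
      ext y
      simp only [mem_inter, mem_union, mem_sdiff]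
      constructor
      · rintro ⟨h1 | h1, h2 | h2⟩
        · exact h1
        · exact h1
        · exact h2
        · exact absurd h1 h2.2
      · intro h
        exact ⟨Or.inl h, Or.inl h⟩
    have eST : (I ∪ A) ∪ (I ∪ (D \ A)) = I ∪ D := by
      ext y
      simp only [mem_union, mem_sdiff]
      have := hAD y
      by_cases hyA : y ∈ A <;> tauto
    have e3 : (I ∪ A) \ (I ∪ (D \ A)) = A := by
      ext y
      simp only [mem_sdiff, mem_union]
      have h1 := hAD y
      have h2 := hd y
      by_cases hyA : y ∈ A <;> by_cases hyI : y ∈ I <;> tauto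
    rw [e1, eST, union_sdiff_cancel_left hdisj, e3]
  · rintro ⟨S, T⟩ _
    dsimp only
    have f1 : (S ∩ T) ∪ (S \ T) = S := by
      ext y
      simp only [mem_union, mem_inter, mem_sdiff]
      tauto
    have f2 : (S ∩ T) ∪ (((S ∪ T) \ (S ∩ T)) \ (S \ T)) = T := by
      ext y
      simp only [mem_union, mem_inter, mem_sdiff]
      by_cases h1 : y ∈ S <;> by_cases h2 : y ∈ T <;> tauto
    rw [f1, f2]
  · intro x _
    rfl

variable {N : ℕ}

noncomputable def Xf (p : Fin N → ℝ) (u : ℝ) (j : Fin N) : ℝ := (1 + p j * u) / (1 - p j * u)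

noncomputable def d2 (p : Fin N → ℝ) (i j : Fin N) : ℝ := ((p i - p j) / (p i + p j)) ^ 2

noncomputable def Wt (p : Fin N → ℝ) (S : Finset (Fin N)) : ℝ :=
  ∏ i ∈ S, ∏ j ∈ S.filter (fun j => i < j), d2 p i j

lemma d2_symm (p : Fin N → ℝ) : ∀ i j, d2 p i j = d2 p j i := by
  intro i j; unfold d2; ring

lemma sq_symm (q : Fin N → ℝ) : ∀ i j : Fin N, (q i - q j) ^ 2 = (q j - q i) ^ 2 := by
  intro i j; ring

lemma add_sq_symm (p : Fin N → ℝ) : ∀ i j : Fin N, (p i + p j) ^ 2 = (p j + p i) ^ 2 := by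
  intro i j; ring

/-- identity (i): pair weights versus the squared Vandermonde -/
lemma pair_weight_split (p : Fin N → ℝ) (hp : ∀ j, 0 < p j)
    {A B : Finset (Fin N)} (hAB : Disjoint A B) :
    (Wt p A * Wt p B) * (∏ i ∈ A ∪ B, ∏ j ∈ (A ∪ B).filter (fun j => i < j), (p i + p j) ^ 2)
    = VV (A ∪ B) (qf p A) := by
  have hpadd : ∀ i j : Fin N, ((p i + p j) ^ 2 : ℝ) ≠ 0 :=
    fun i j => pow_ne_zero _ (ne_of_gt (add_pos (hp i) (hp j)))
  rw [VV_nested, prod_pairs_union (fun i j => (qf p A i - qf p A j) ^ 2) (sq_symm _) hAB,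
    prod_pairs_union (fun i j => (p i + p j) ^ 2) (add_sq_symm p) hAB]
  have b1 : Wt p A * (∏ i ∈ A, ∏ j ∈ A.filter (fun j => i < j), (p i + p j) ^ 2)
      = ∏ i ∈ A, ∏ j ∈ A.filter (fun j => i < j), (qf p A i - qf p A j) ^ 2 := by
    unfold Wt
    rw [← prod_mul_distrib]
    refine prod_congr rfl fun i hi => ?_
    rw [← prod_mul_distrib]
    refine prod_congr rfl fun j hj => ?_
    have hjA : j ∈ A := (mem_filter.mp hj).1
    unfold d2 qf
    rw [if_pos hi, if_pos hjA, div_pow, div_mul_cancel₀ _ (hpadd i j)]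
  have b2 : Wt p B * (∏ i ∈ B, ∏ j ∈ B.filter (fun j => i < j), (p i + p j) ^ 2)
      = ∏ i ∈ B, ∏ j ∈ B.filter (fun j => i < j), (qf p A i - qf p A j) ^ 2 := by
    unfold Wt
    rw [← prod_mul_distrib]
    refine prod_congr rfl fun i hi => ?_
    rw [← prod_mul_distrib]
    refine prod_congr rfl fun j hj => ?_
    have hjB : j ∈ B := (mem_filter.mp hj).1
    have hiA : i ∉ A := disjoint_right.mp hAB hi
    have hjA : j ∉ A := disjoint_right.mp hAB hjB
    unfold d2 qf
    rw [if_neg hiA, if_neg hjA, div_pow, div_mul_cancel₀ _ (hpadd i j)]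
    ring
  have b3 : (∏ i ∈ A, ∏ j ∈ B, ((p i + p j) ^ 2 : ℝ))
      = ∏ i ∈ A, ∏ j ∈ B, (qf p A i - qf p A j) ^ 2 := by
    refine prod_congr rfl fun i hi => prod_congr rfl fun j hj => ?_
    have hjA : j ∉ A := disjoint_right.mp hAB hj
    unfold qf
    rw [if_pos hi, if_neg hjA]
    ring
  rw [← b1, ← b2, ← b3]
  ring

/-- identity (ii): one bracket term against the `Gf` products -/
lemma bracket_term_split (p : Fin N → ℝ) (u v w : ℝ)
    (hu : ∀ j, 1 - p j * u ≠ 0) (hv : ∀ j, 1 - p j * v ≠ 0) (hw : ∀ j, 1 - p j * w ≠ 0)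
    {A B : Finset (Fin N)} (hAB : Disjoint A B) :
    (∏ j ∈ A, Xf p u j) * ((∏ j ∈ B, Xf p v j) * (∏ j ∈ B, Xf p w j))
      * ∏ j ∈ A ∪ B, ((1 - p j * u) * (1 + p j * u) * (1 - p j * v) * (1 + p j * v)
          * (1 - p j * w) * (1 + p j * w))
    = (∏ j ∈ A ∪ B, ((1 + p j * u) * (1 + p j * v) * (1 + p j * w)))
      * ∏ j ∈ A ∪ B, Gf u v w (qf p A j) := by
  rw [prod_union hAB, prod_union hAB, prod_union hAB]
  have eA : (∏ j ∈ A, Xf p u j)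
      * (∏ j ∈ A, ((1 - p j * u) * (1 + p j * u) * (1 - p j * v) * (1 + p j * v)
          * (1 - p j * w) * (1 + p j * w)))
      = (∏ j ∈ A, ((1 + p j * u) * (1 + p j * v) * (1 + p j * w)))
        * ∏ j ∈ A, Gf u v w (qf p A j) := by
    rw [← prod_mul_distrib, ← prod_mul_distrib]
    refine prod_congr rfl fun j hj => ?_
    unfold Xf Gf qf
    rw [if_pos hj, div_mul_eq_mul_div, div_eq_iff (hu j)]
    ring
  have eB : ((∏ j ∈ B, Xf p v j) * (∏ j ∈ B, Xf p w j))
      * (∏ j ∈ B, ((1 - p j * u) * (1 + p j * u) * (1 - p j * v) * (1 + p j * v)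
          * (1 - p j * w) * (1 + p j * w)))
      = (∏ j ∈ B, ((1 + p j * u) * (1 + p j * v) * (1 + p j * w)))
        * ∏ j ∈ B, Gf u v w (qf p A j) := by
    rw [← prod_mul_distrib, ← prod_mul_distrib, ← prod_mul_distrib]
    refine prod_congr rfl fun j hj => ?_
    have hjA : j ∉ A := disjoint_right.mp hAB hj
    unfold Xf Gf qf
    rw [if_neg hjA]
    field_simp [hv j, hw j]
    ring
  calc (∏ j ∈ A, Xf p u j) * ((∏ j ∈ B, Xf p v j) * (∏ j ∈ B, Xf p w j))
      * ((∏ j ∈ A, ((1 - p j * u) * (1 + p j * u) * (1 - p j * v) * (1 + p j * v)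
          * (1 - p j * w) * (1 + p j * w)))
        * (∏ j ∈ B, ((1 - p j * u) * (1 + p j * u) * (1 - p j * v) * (1 + p j * v)
          * (1 - p j * w) * (1 + p j * w))))
      = ((∏ j ∈ A, Xf p u j)
          * (∏ j ∈ A, ((1 - p j * u) * (1 + p j * u) * (1 - p j * v) * (1 + p j * v)
              * (1 - p j * w) * (1 + p j * w))))
        * (((∏ j ∈ B, Xf p v j) * (∏ j ∈ B, Xf p w j))
          * (∏ j ∈ B, ((1 - p j * u) * (1 + p j * u) * (1 - p j * v) * (1 + p j * v)
              * (1 - p j * w) * (1 + p j * w)))) := by ring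
    _ = _ := by rw [eA, eB]; ring

variable {N : ℕ}

noncomputable def basf (p a : Fin N → ℝ) (α β γ : ℝ) (l m n : ℤ) (S : Finset (Fin N)) : ℝ :=
  ∏ j ∈ S, a j * Xf p α j ^ l * Xf p β j ^ m * Xf p γ j ^ n

lemma tauD_eq (p a : Fin N → ℝ) (α β γ : ℝ) (l m n : ℤ) :
    tauD p a α β γ l m n = ∑ S : Finset (Fin N), Wt p S * basf p a α β γ l m n S := rfl

lemma basf_shift_l (p a : Fin N → ℝ) (α β γ : ℝ) (l m n : ℤ)
    (hX : ∀ j, Xf p α j ≠ 0) (S : Finset (Fin N)) :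
    basf p a α β γ (l+1) m n S = (∏ j ∈ S, Xf p α j) * basf p a α β γ l m n S := by
  unfold basf
  rw [← prod_mul_distrib]
  refine prod_congr rfl fun j _ => ?_
  rw [zpow_add_one₀ (hX j)]
  ring

lemma basf_shift_m (p a : Fin N → ℝ) (α β γ : ℝ) (l m n : ℤ)
    (hY : ∀ j, Xf p β j ≠ 0) (S : Finset (Fin N)) :
    basf p a α β γ l (m+1) n S = (∏ j ∈ S, Xf p β j) * basf p a α β γ l m n S := by
  unfold basf
  rw [← prod_mul_distrib]
  refine prod_congr rfl fun j _ => ?_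
  rw [zpow_add_one₀ (hY j)]
  ring

lemma basf_shift_n (p a : Fin N → ℝ) (α β γ : ℝ) (l m n : ℤ)
    (hZ : ∀ j, Xf p γ j ≠ 0) (S : Finset (Fin N)) :
    basf p a α β γ l m (n+1) S = (∏ j ∈ S, Xf p γ j) * basf p a α β γ l m n S := by
  unfold basf
  rw [← prod_mul_distrib]
  refine prod_congr rfl fun j _ => ?_
  rw [zpow_add_one₀ (hZ j)]
  ring

end HMaux

open Finset HMaux

/-- the discrete `N`-soliton tau function satisfies the Hirota–Miwa
(discrete KP) equation. -/
theorem tauD_satisfies_HirotaMiwa (N : ℕ) (p a : Fin N → ℝ) (α β γ : ℝ)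
    (hp : ∀ j, 0 < p j) (hα : α ≠ 0) (hβ : β ≠ 0) (hγ : γ ≠ 0)
    (hpα : ∀ j, p j * α ≠ 1 ∧ p j * α ≠ -1)
    (hpβ : ∀ j, p j * β ≠ 1 ∧ p j * β ≠ -1)
    (hpγ : ∀ j, p j * γ ≠ 1 ∧ p j * γ ≠ -1) :
    ∀ l m n : ℤ,
      α * (β - γ) * tauD p a α β γ (l + 1) m n * tauD p a α β γ l (m + 1) (n + 1) +
        β * (γ - α) * tauD p a α β γ l (m + 1) n * tauD p a α β γ (l + 1) m (n + 1) +
        γ * (α - β) * tauD p a α β γ l m (n + 1) * tauD p a α β γ (l + 1) (m + 1) n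
        = 0 := by
  classical
  intro l m n
  have hαm : ∀ j, 1 - p j * α ≠ 0 := fun j => sub_ne_zero.mpr (Ne.symm (hpα j).1)
  have hβm : ∀ j, 1 - p j * β ≠ 0 := fun j => sub_ne_zero.mpr (Ne.symm (hpβ j).1)
  have hγm : ∀ j, 1 - p j * γ ≠ 0 := fun j => sub_ne_zero.mpr (Ne.symm (hpγ j).1)
  have hαp : ∀ j, 1 + p j * α ≠ 0 := fun j h => (hpα j).2 (by linarith)
  have hβp : ∀ j, 1 + p j * β ≠ 0 := fun j h => (hpβ j).2 (by linarith)
  have hγp : ∀ j, 1 + p j * γ ≠ 0 := fun j h => (hpγ j).2 (by linarith)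
  have hXα : ∀ j, Xf p α j ≠ 0 := fun j => div_ne_zero (hαp j) (hαm j)
  have hXβ : ∀ j, Xf p β j ≠ 0 := fun j => div_ne_zero (hβp j) (hβm j)
  have hXγ : ∀ j, Xf p γ j ≠ 0 := fun j => div_ne_zero (hγp j) (hγm j)
  set bas : Finset (Fin N) → ℝ := basf p a α β γ l m n with hbasdef
  -- the six shifted tau functions
  have ht1 : tauD p a α β γ (l+1) m n
      = ∑ S : Finset (Fin N), Wt p S * ((∏ j ∈ S, Xf p α j) * bas S) := by
    rw [tauD_eq]
    exact sum_congr rfl fun S _ => by rw [basf_shift_l p a α β γ l m n hXα]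
  have ht2 : tauD p a α β γ l (m+1) (n+1)
      = ∑ S : Finset (Fin N), Wt p S * ((∏ j ∈ S, Xf p β j) * ((∏ j ∈ S, Xf p γ j) * bas S)) := by
    rw [tauD_eq]
    exact sum_congr rfl fun S _ => by
      rw [basf_shift_m p a α β γ l m (n+1) hXβ, basf_shift_n p a α β γ l m n hXγ]
  have ht3 : tauD p a α β γ l (m+1) n
      = ∑ S : Finset (Fin N), Wt p S * ((∏ j ∈ S, Xf p β j) * bas S) := by
    rw [tauD_eq]
    exact sum_congr rfl fun S _ => by rw [basf_shift_m p a α β γ l m n hXβ]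
  have ht4 : tauD p a α β γ (l+1) m (n+1)
      = ∑ S : Finset (Fin N), Wt p S * ((∏ j ∈ S, Xf p α j) * ((∏ j ∈ S, Xf p γ j) * bas S)) := by
    rw [tauD_eq]
    exact sum_congr rfl fun S _ => by
      rw [basf_shift_l p a α β γ l m (n+1) hXα, basf_shift_n p a α β γ l m n hXγ]
  have ht5 : tauD p a α β γ l m (n+1)
      = ∑ S : Finset (Fin N), Wt p S * ((∏ j ∈ S, Xf p γ j) * bas S) := by
    rw [tauD_eq]
    exact sum_congr rfl fun S _ => by rw [basf_shift_n p a α β γ l m n hXγ]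
  have ht6 : tauD p a α β γ (l+1) (m+1) n
      = ∑ S : Finset (Fin N), Wt p S * ((∏ j ∈ S, Xf p α j) * ((∏ j ∈ S, Xf p β j) * bas S)) := by
    rw [tauD_eq]
    exact sum_congr rfl fun S _ => by
      rw [basf_shift_l p a α β γ l (m+1) n hXα, basf_shift_m p a α β γ l m n hXβ]
  set F : Finset (Fin N) → Finset (Fin N) → ℝ := fun S T =>
    Wt p S * Wt p T * bas S * bas T *
      (α*(β-γ) * ((∏ j ∈ S, Xf p α j) * ((∏ j ∈ T, Xf p β j) * (∏ j ∈ T, Xf p γ j)))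
       + β*(γ-α) * ((∏ j ∈ S, Xf p β j) * ((∏ j ∈ T, Xf p α j) * (∏ j ∈ T, Xf p γ j)))
       + γ*(α-β) * ((∏ j ∈ S, Xf p γ j) * ((∏ j ∈ T, Xf p α j) * (∏ j ∈ T, Xf p β j)))) with hF
  have hc : ∀ (c : ℝ) (f g : Finset (Fin N) → ℝ),
      c * (∑ S : Finset (Fin N), f S) * (∑ T : Finset (Fin N), g T)
      = ∑ S : Finset (Fin N), ∑ T : Finset (Fin N), c * (f S * g T) := by
    intro c f g
    rw [mul_assoc, sum_mul_sum, mul_sum]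
    exact sum_congr rfl fun S _ => by rw [mul_sum]
  have hLHS : α * (β - γ) * tauD p a α β γ (l + 1) m n * tauD p a α β γ l (m + 1) (n + 1) +
      β * (γ - α) * tauD p a α β γ l (m + 1) n * tauD p a α β γ (l + 1) m (n + 1) +
      γ * (α - β) * tauD p a α β γ l m (n + 1) * tauD p a α β γ (l + 1) (m + 1) n
      = ∑ S : Finset (Fin N), ∑ T : Finset (Fin N), F S T := by
    rw [ht1, ht2, ht3, ht4, ht5, ht6, hc, hc, hc, ← sum_add_distrib, ← sum_add_distrib]
    refine sum_congr rfl fun S _ => ?_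
    rw [← sum_add_distrib, ← sum_add_distrib]
    refine sum_congr rfl fun T _ => ?_
    rw [hF]
    ring
  rw [hLHS, pair_reindex F]
  refine sum_eq_zero fun ID hID => ?_
  have hdisj : Disjoint ID.1 ID.2 := (mem_filter.mp hID).2
  set I := ID.1 with hI
  set D := ID.2 with hD
  -- notation for the fixed pieces
  set PD : ℝ := ∏ i ∈ D, ∏ j ∈ D.filter (fun j => i < j), (p i + p j) ^ 2 with hPD
  set DD : ℝ := ∏ j ∈ D, ((1 - p j * α) * (1 + p j * α) * (1 - p j * β) * (1 + p j * β)
      * (1 - p j * γ) * (1 + p j * γ)) with hDD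
  set PPl : ℝ := ∏ j ∈ D, ((1 + p j * α) * (1 + p j * β) * (1 + p j * γ)) with hPPl
  set BR : Finset (Fin N) → ℝ := fun A =>
      α*(β-γ) * ((∏ j ∈ A, Xf p α j) * ((∏ j ∈ D \ A, Xf p β j) * (∏ j ∈ D \ A, Xf p γ j)))
      + β*(γ-α) * ((∏ j ∈ A, Xf p β j) * ((∏ j ∈ D \ A, Xf p α j) * (∏ j ∈ D \ A, Xf p γ j)))
      + γ*(α-β) * ((∏ j ∈ A, Xf p γ j) * ((∏ j ∈ D \ A, Xf p α j) * (∏ j ∈ D \ A, Xf p β j)))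
    with hBR
  -- step D1: each term factors through the A-dependent part
  have hterm : ∀ A ∈ D.powerset, F (I ∪ A) (I ∪ (D \ A))
      = (Wt p I * Wt p I * (∏ i ∈ I, ∏ j ∈ D, d2 p i j)
          * (bas I * bas I * bas D)
          * ((∏ j ∈ I, Xf p α j) * ((∏ j ∈ I, Xf p β j) * (∏ j ∈ I, Xf p γ j))))
        * (Wt p A * Wt p (D \ A) * BR A) := by
    intro A hA
    have hA' : A ⊆ D := mem_powerset.mp hA
    have hIA : Disjoint I A := disjoint_of_subset_right hA' hdisj
    have hIB : Disjoint I (D \ A) := disjoint_of_subset_right (sdiff_subset) hdisj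
    have hABd : Disjoint A (D \ A) := disjoint_sdiff
    have hUn : A ∪ (D \ A) = D := union_sdiff_of_subset hA'
    have hWA : Wt p (I ∪ A) = (Wt p I * Wt p A) * (∏ i ∈ I, ∏ j ∈ A, d2 p i j) :=
      prod_pairs_union (d2 p) (d2_symm p) hIA
    have hWB : Wt p (I ∪ (D \ A)) = (Wt p I * Wt p (D \ A)) * (∏ i ∈ I, ∏ j ∈ D \ A, d2 p i j) :=
      prod_pairs_union (d2 p) (d2_symm p) hIB
    have hcross : (∏ i ∈ I, ∏ j ∈ A, d2 p i j) * (∏ i ∈ I, ∏ j ∈ D \ A, d2 p i j)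
        = ∏ i ∈ I, ∏ j ∈ D, d2 p i j := by
      rw [← prod_mul_distrib]
      exact prod_congr rfl fun i _ => by rw [← prod_union hABd, hUn]
    have hbasA : bas (I ∪ A) = bas I * bas A := prod_union hIA
    have hbasB : bas (I ∪ (D \ A)) = bas I * bas (D \ A) := prod_union hIB
    have hbasD : bas D = bas A * bas (D \ A) := by
      conv_lhs => rw [← hUn]
      exact prod_union hABd
    have hXu : ∀ u : ℝ, (∏ j ∈ I ∪ A, Xf p u j) = (∏ j ∈ I, Xf p u j) * (∏ j ∈ A, Xf p u j) :=
      fun u => prod_union hIA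
    have hXu' : ∀ u : ℝ, (∏ j ∈ I ∪ (D \ A), Xf p u j)
        = (∏ j ∈ I, Xf p u j) * (∏ j ∈ D \ A, Xf p u j) := fun u => prod_union hIB
    rw [hF, hBR]
    dsimp only
    rw [hWA, hWB, hbasA, hbasB, hXu α, hXu β, hXu γ, hXu' α, hXu' β, hXu' γ,
      ← hcross, hbasD]
    ring
  rw [sum_congr rfl hterm, ← mul_sum]
  -- step D2: the A-sum vanishes
  have hSD : (∑ A ∈ D.powerset, Wt p A * Wt p (D \ A) * BR A) * (PD * DD)
      = PPl * coreSum α β γ D p := by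
    unfold coreSum
    rw [sum_mul, mul_sum]
    refine sum_congr rfl fun A hA => ?_
    have hA' : A ⊆ D := mem_powerset.mp hA
    have hABd : Disjoint A (D \ A) := disjoint_sdiff
    have hUn : A ∪ (D \ A) = D := union_sdiff_of_subset hA'
    have h1 := pair_weight_split p hp hABd
    rw [hUn] at h1
    have h2 := bracket_term_split p α β γ hαm hβm hγm hABd
    rw [hUn] at h2
    have h3 := bracket_term_split p β α γ hβm hαm hγm hABd
    rw [hUn] at h3
    have h4 := bracket_term_split p γ α β hγm hαm hβm hABd
    rw [hUn] at h4
    have hΔ3 : (∏ j ∈ D, ((1 - p j * β) * (1 + p j * β) * (1 - p j * α) * (1 + p j * α)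
        * (1 - p j * γ) * (1 + p j * γ))) = DD := by
      rw [hDD]; exact prod_congr rfl fun j _ => by ring
    have hΔ4 : (∏ j ∈ D, ((1 - p j * γ) * (1 + p j * γ) * (1 - p j * α) * (1 + p j * α)
        * (1 - p j * β) * (1 + p j * β))) = DD := by
      rw [hDD]; exact prod_congr rfl fun j _ => by ring
    have hPl3 : (∏ j ∈ D, ((1 + p j * β) * (1 + p j * α) * (1 + p j * γ))) = PPl := by
      rw [hPPl]; exact prod_congr rfl fun j _ => by ring
    have hPl4 : (∏ j ∈ D, ((1 + p j * γ) * (1 + p j * α) * (1 + p j * β))) = PPl := by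
      rw [hPPl]; exact prod_congr rfl fun j _ => by ring
    rw [hΔ3, hPl3] at h3
    rw [hΔ4, hPl4] at h4
    rw [hBR]
    unfold HP
    dsimp only
    linear_combination (α*(β-γ) * (Wt p A * Wt p (D \ A) * PD)) * h2
      + (β*(γ-α) * (Wt p A * Wt p (D \ A) * PD)) * h3
      + (γ*(α-β) * (Wt p A * Wt p (D \ A) * PD)) * h4
      + ((α * (β - γ) * ∏ j ∈ D, Gf α β γ (qf p A j)
          + β * (γ - α) * ∏ j ∈ D, Gf β α γ (qf p A j)
          + γ * (α - β) * ∏ j ∈ D, Gf γ α β (qf p A j)) * PPl) * h1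
  have hPDne : PD ≠ 0 := by
    rw [hPD]
    refine prod_ne_zero_iff.mpr fun i _ => ?_
    exact prod_ne_zero_iff.mpr fun j _ =>
      pow_ne_zero _ (ne_of_gt (add_pos (hp i) (hp j)))
  have hDDne : DD ≠ 0 := by
    rw [hDD]
    refine prod_ne_zero_iff.mpr fun j _ => ?_
    exact mul_ne_zero (mul_ne_zero (mul_ne_zero (mul_ne_zero (mul_ne_zero
      (hαm j) (hαp j)) (hβm j)) (hβp j)) (hγm j)) (hγp j)
  have hcore : coreSum α β γ D p = 0 := coreSum_eq_zero α β γ D p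
  rw [hcore, mul_zero] at hSD
  have hSD0 : (∑ A ∈ D.powerset, Wt p A * Wt p (D \ A) * BR A) = 0 := by
    rcases mul_eq_zero.mp hSD with h | h
    · exact h
    · exact absurd h (mul_ne_zero hPDne hDDne)
  rw [hSD0, mul_zero]
end
end
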